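/- arXiv:1704.07255 — 3 statements merged into one kernel-verified Lean document; each statement's English description precedes it below -/
import Mathlib

section
/- Let M be a σ-finite von Neumann algebra, φ a normal faithful state on M, and D = ⊕_{j∈J} C e_j a finite dimensional abelian *-subalgebra where (e_j) are the nonzero minimal projections. For a family of finite dimensional abelian *-subalgebras A_j ⊆ e_j M e_j, the direct sum A = ⊕_{j∈J} A_j is a finite dimensional abelian *-subalgebra of M containing D, and for any x ∈ M, the φ-norm identity ‖E^φ_{A'∩M}(x) − E^φ_A(x)‖_φ² = Σ_{j∈J} φ(e_j) ‖E^{φ_{e_j}}_{A_j'∩e_jMe_j}(e_j x e_j) − E^{φ_{e_j}}_{A_j}(e_j x e_j)‖²_{φ_{e_j}} holds, where φ_{e_j} = φ(e_j · e_j)/φ(e_j). -/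
open scoped ComplexOrder
open Filter

noncomputable section

namespace HoudayerPopa

variable (H : Type) [NormedAddCommGroup H] [InnerProductSpace ℂ H] [CompleteSpace H]

/-- Bounded operators on `H`. -/
abbrev BH := H →L[ℂ] H

variable {H}

/-- A normal faithful state on a von Neumann algebra `M ⊆ B(H)`.  Normality is encoded by the
standard characterization: the state is implemented by a square-summable sequence of vectors. -/
structure NFState (M : VonNeumannAlgebra H) where
  toFun : BH H →ₗ[ℂ] ℂ
  map_one' : toFun 1 = 1
  pos' : ∀ x : BH H, 0 ≤ toFun (star x * x)
  faithful' : ∀ x ∈ M, toFun (star x * x) = 0 → x = 0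
  normal' : ∃ ξ : ℕ → H, Summable (fun n => ‖ξ n‖ ^ 2) ∧
      ∀ x : BH H, toFun x = ∑' n, (inner ℂ (ξ n) (x (ξ n)) : ℂ)

/-- The GNS (`L²`) norm `‖x‖_φ = φ(x*x)^{1/2}` associated with a state. -/
def φnorm {M : VonNeumannAlgebra H} (φ : NFState M) (x : BH H) : ℝ :=
  Real.sqrt (φ.toFun (star x * x)).re

/-- `p` is an (orthogonal) projection. -/
def IsProjection (p : BH H) : Prop := IsSelfAdjoint p ∧ p * p = p

/-- `u` is a unitary. -/
def IsUnitaryOp (u : BH H) : Prop := star u * u = 1 ∧ u * star u = 1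

/-- The relative commutant `S' ∩ T` of a set `S` inside a set `T`. -/
def relComm (S T : Set (BH H)) : Set (BH H) := {x | x ∈ T ∧ ∀ s ∈ S, s * x = x * s}

/-- A (unital) *-subalgebra, as a subset. -/
def IsStarSubalgebraSet (S : Set (BH H)) : Prop :=
  (1 : BH H) ∈ S ∧ (∀ x ∈ S, ∀ y ∈ S, x + y ∈ S) ∧ (∀ (c : ℂ), ∀ x ∈ S, c • x ∈ S) ∧
    (∀ x ∈ S, ∀ y ∈ S, x * y ∈ S) ∧ (∀ x ∈ S, star x ∈ S)

/-- Abelian subset. -/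
def IsAbelianSet (S : Set (BH H)) : Prop := ∀ x ∈ S, ∀ y ∈ S, x * y = y * x

/-- The centralizer `M_φ = {x ∈ M : φ(xy) = φ(yx) ∀ y ∈ M}` of a normal faithful state,
which coincides with the fixed-point algebra of the modular flow `σ^φ`. -/
def stateCentralizer (M : VonNeumannAlgebra H) (φ : NFState M) : Set (BH H) :=
  {x | x ∈ M ∧ ∀ y ∈ M, φ.toFun (x * y) = φ.toFun (y * x)}

/-- The set of scalar operators `ℂ1`. -/
def Scalars (H : Type) [NormedAddCommGroup H] [InnerProductSpace ℂ H] [CompleteSpace H] :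
    Set (BH H) := {x | ∃ c : ℂ, x = c • (1 : BH H)}

/-- The modular automorphism group `σ^φ` of a normal faithful state `φ` on `M`, characterized
by the KMS condition. -/
structure ModularFlow (M : VonNeumannAlgebra H) (φ : NFState M) where
  σ : ℝ → BH H → BH H
  σ_zero' : σ 0 = id
  σ_add' : ∀ s t x, σ (s + t) x = σ s (σ t x)
  mem' : ∀ t, ∀ x ∈ M, σ t x ∈ M
  linear' : ∀ t, IsLinearMap ℂ (σ t)
  map_mul' : ∀ t x y, σ t (x * y) = σ t x * σ t y
  map_star' : ∀ t x, σ t (star x) = star (σ t x)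
  invariant' : ∀ t x, φ.toFun (σ t x) = φ.toFun x
  continuous' : ∀ x ∈ M, ∀ ξ : H, Continuous fun t => σ t x ξ
  kms' : ∀ x ∈ M, ∀ y ∈ M, ∃ F : ℂ → ℂ,
      ContinuousOn F {z | 0 ≤ z.im ∧ z.im ≤ 1} ∧
      DifferentiableOn ℂ F {z | 0 < z.im ∧ z.im < 1} ∧
      (∀ t : ℝ, F t = φ.toFun (σ t x * y)) ∧
      (∀ t : ℝ, F (t + Complex.I) = φ.toFun (y * σ t x))

/-- `x` is entire analytic for the modular flow. -/
def IsEntireAnalytic {M : VonNeumannAlgebra H} {φ : NFState M} (m : ModularFlow M φ)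
    (v : BH H) : Prop :=
  ∃ G : ℂ → BH H, Differentiable ℂ G ∧ ∀ t : ℝ, G t = m.σ t v

/-- A `φ`-preserving conditional expectation from (the subset) `D` onto `S ⊆ D`. -/
structure CondExpOn (φ : BH H →ₗ[ℂ] ℂ) (D S : Set (BH H)) where
  E : BH H →ₗ[ℂ] BH H
  mem' : ∀ x ∈ D, E x ∈ S
  fix' : ∀ x ∈ S, E x = x
  pos' : ∀ x : BH H, x.IsPositive → (E x).IsPositive
  preserve' : ∀ x ∈ D, φ (E x) = φ x
  bimod' : ∀ a ∈ S, ∀ x ∈ D, ∀ b ∈ S, E (a * x * b) = a * E x * b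

/-- Normality (σ-weak continuity) of a map on `D`: it preserves the class of functionals
implemented by square-summable sequences of vectors. -/
def IsNormalMapFun (D : Set (BH H)) (T : BH H → BH H) : Prop :=
  ∀ ξ : ℕ → H, Summable (fun n => ‖ξ n‖ ^ 2) →
    ∃ η : ℕ → H, Summable (fun n => ‖η n‖ ^ 2) ∧
      ∀ x ∈ D, (∑' n, (inner ℂ (ξ n) (T x (ξ n)) : ℂ)) = ∑' n, (inner ℂ (η n) (x (η n)) : ℂ)

/-- A normal faithful conditional expectation from `M` onto the subset `S`. -/
structure NormalCondExp (M : VonNeumannAlgebra H) (S : Set (BH H)) where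
  E : BH H →ₗ[ℂ] BH H
  mem' : ∀ x ∈ M, E x ∈ S
  fix' : ∀ x ∈ S, E x = x
  pos' : ∀ x : BH H, x.IsPositive → (E x).IsPositive
  bimod' : ∀ a ∈ S, ∀ x ∈ M, ∀ b ∈ S, E (a * x * b) = a * E x * b
  normal' : IsNormalMapFun (M : Set (BH H)) E
  faithful' : ∀ x ∈ M, x.IsPositive → E x = 0 → x = 0

/-- `M` is a factor: its center is trivial. -/
def IsFactor (M : VonNeumannAlgebra H) : Prop :=
  relComm (M : Set (BH H)) (M : Set (BH H)) ⊆ Scalars H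

/-- `M` is a type III₁ factor.  We use the Connes–Størmer characterization: a factor
(other than `ℂ`) is of type III₁ if and only if its normal state space is homogeneous,
i.e. any two normal faithful states are approximately unitarily equivalent in norm. -/
def IsTypeIII₁Factor (M : VonNeumannAlgebra H) : Prop :=
  IsFactor M ∧ (M : Set (BH H)) ≠ Scalars H ∧
    ∀ φ ψ : NFState M, ∀ ε : ℝ, 0 < ε → ∃ u ∈ M, IsUnitaryOp u ∧
      ∀ x ∈ M, ‖x‖ ≤ 1 → ‖ψ.toFun x - φ.toFun (star u * x * u)‖ < ε

/-- The norm `‖xφ - φx‖` of the commutator of `x ∈ M` with the state `φ`, in the predual. -/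
def commNorm (M : VonNeumannAlgebra H) (φ : NFState M) (x : BH H) : ℝ :=
  sSup {r | ∃ y ∈ M, ‖y‖ ≤ 1 ∧ r = ‖φ.toFun (y * x) - φ.toFun (x * y)‖}

/-- Bounded sequences in `M` asymptotically commuting with `φ` in the predual norm. -/
def AC (M : VonNeumannAlgebra H) (φ : NFState M) : Set (ℕ → BH H) :=
  {x | (∀ n, x n ∈ M) ∧ (∃ C : ℝ, ∀ n, ‖x n‖ ≤ C) ∧
    Tendsto (fun n => commNorm M φ (x n)) atTop (nhds 0)}

/-- Connes' bicentralizer `B(M, φ)`. -/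
def Bicentralizer (M : VonNeumannAlgebra H) (φ : NFState M) : Set (BH H) :=
  {a | a ∈ M ∧ ∀ x ∈ AC M φ,
    Tendsto (fun n => φnorm φ (x n * a - a * x n)) atTop (nhds 0)}

/-- Connes' Bicentralizer Property. -/
def HasCBP (M : VonNeumannAlgebra H) : Prop :=
  ∃ φ : NFState M, Bicentralizer M φ = Scalars H

/-- `A` is a maximal abelian *-subalgebra of `M`: `A` is abelian and `A' ∩ M = A`. -/
def IsMasaIn (A : Set (BH H)) (M : VonNeumannAlgebra H) : Prop :=
  A ⊆ (M : Set (BH H)) ∧ IsStarSubalgebraSet A ∧ IsAbelianSet A ∧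
    relComm A (M : Set (BH H)) = A

/-- `A` is singular in `M`: every unitary of `M` normalizing `A` lies in `A`. -/
def IsSingularIn (A : Set (BH H)) (M : VonNeumannAlgebra H) : Prop :=
  ∀ u ∈ M, IsUnitaryOp u → (∀ a ∈ A, u * a * star u ∈ A) →
    (∀ a ∈ A, star u * a * u ∈ A) → u ∈ A

/-- The corner `eMe`. -/
def cornerSet (M : VonNeumannAlgebra H) (e : BH H) : Set (BH H) :=
  {x | x ∈ M ∧ e * x * e = x}


/-- Bounded sequences in `M` converging to `0` *-strongly along `ω` (using the metric
`‖·‖²_φ + ‖·*‖²_φ` for the strong* topology on bounded sets). -/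
def IωSeq (M : VonNeumannAlgebra H) (φ : NFState M) (ω : Filter ℕ) : Set (ℕ → BH H) :=
  {x | (∀ n, x n ∈ M) ∧ (∃ C : ℝ, ∀ n, ‖x n‖ ≤ C) ∧
    Tendsto (fun n => (φ.toFun (star (x n) * x n) + φ.toFun (x n * star (x n))).re)
      ω (nhds 0)}

/-- The `ω`-multiplier sequences of `M`. -/
def MultSeq (M : VonNeumannAlgebra H) (φ : NFState M) (ω : Filter ℕ) : Set (ℕ → BH H) :=
  {x | (∀ n, x n ∈ M) ∧ (∃ C : ℝ, ∀ n, ‖x n‖ ≤ C) ∧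
    ∀ y ∈ IωSeq M φ ω,
      (fun n => x n * y n) ∈ IωSeq M φ ω ∧ (fun n => y n * x n) ∈ IωSeq M φ ω}

/-- The Ocneanu ultraproduct `M^ω = M^ω(M)/I_ω(M)`, axiomatized: a von Neumann algebra `Mω`
on a Hilbert space `K` together with the quotient map `π` from multiplier sequences, with
kernel `I_ω`, and the ultraproduct state `φω = lim_ω φ`. -/
structure OcneanuUltraproduct (M : VonNeumannAlgebra H) (φ : NFState M) (ω : Filter ℕ)
    (K : Type) [NormedAddCommGroup K] [InnerProductSpace ℂ K] [CompleteSpace K] where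
  Mω : VonNeumannAlgebra K
  π : (ℕ → BH H) → BH K
  mem' : ∀ x ∈ MultSeq M φ ω, π x ∈ Mω
  surj' : ∀ y ∈ Mω, ∃ x ∈ MultSeq M φ ω, π x = y
  add' : ∀ x ∈ MultSeq M φ ω, ∀ y ∈ MultSeq M φ ω, π (x + y) = π x + π y
  smul' : ∀ (c : ℂ), ∀ x ∈ MultSeq M φ ω, π (c • x) = c • π x
  mul' : ∀ x ∈ MultSeq M φ ω, ∀ y ∈ MultSeq M φ ω, π (x * y) = π x * π y
  star' : ∀ x ∈ MultSeq M φ ω, π (fun n => star (x n)) = star (π x)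
  one' : π (fun _ => 1) = 1
  ker' : ∀ x ∈ MultSeq M φ ω, (π x = 0 ↔ x ∈ IωSeq M φ ω)
  φω : BH K →ₗ[ℂ] ℂ
  φω_lim' : ∀ x ∈ MultSeq M φ ω, Tendsto (fun n => φ.toFun (x n)) ω (nhds (φω (π x)))
  φω_state' : φω 1 = 1 ∧ (∀ y : BH K, 0 ≤ φω (star y * y)) ∧
    ∀ y ∈ Mω, φω (star y * y) = 0 → y = 0

end HoudayerPopa

open HoudayerPopa

/-!
Both expectations are pinned down by faithfulness of `φ`: `E x` is the unique `y` in the target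
algebra with `φ(c y) = φ(c x)` for all `c` there. Every element of `A = ⊕ⱼ Aⱼ` and of `A' ∩ M` is
block diagonal with respect to the `eⱼ`, and since the `eⱼ` lie in the centralizer of `φ`, the
block diagonal operator `∑ⱼ F(eⱼ x eⱼ)` built from the corner expectations satisfies that identity.
So `E_{A'∩M}(x) - E_A(x)` is block diagonal, and the `φ`-norm of a block diagonal operator is the
`ℓ²`-sum of the `φ`-norms of its blocks; the factor `φ(eⱼ)` cancels against the normalization of
`φ_{eⱼ}`, and `φ(eⱼ) ≠ 0` by faithfulness.
-/

section Corner

variable {R : Type*}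

theorem IsIdempotentElem.mul_eq_of_corner [Semigroup R] {e x : R} (he : IsIdempotentElem e)
    (hx : e * x * e = x) : e * x = x :=
  ((Subsemigroup.mem_corner_iff he).1 ⟨x, hx⟩).1

theorem IsIdempotentElem.mul_eq_of_corner_right [Semigroup R] {e x : R}
    (he : IsIdempotentElem e) (hx : e * x * e = x) : x * e = x :=
  ((Subsemigroup.mem_corner_iff he).1 ⟨x, hx⟩).2

theorem mul_eq_zero_of_corner [SemigroupWithZero R] {p q u v : R} (hp : IsIdempotentElem p)
    (hq : IsIdempotentElem q) (hpq : p * q = 0) (hu : p * u * p = u) (hv : q * v * q = v) :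
    u * v = 0 :=
  calc u * v = u * p * (q * v) := by rw [hp.mul_eq_of_corner_right hu, hq.mul_eq_of_corner hv]
    _ = u * (p * q) * v := by simp only [mul_assoc]
    _ = 0 := by rw [hpq, mul_zero, zero_mul]

variable [Semiring R] {ι : Type*} [Fintype ι] {e f g : ι → R}

theorem sum_mul_sum_of_corner (he : ∀ i, IsIdempotentElem (e i))
    (horth : Pairwise fun i j => e i * e j = 0)
    (hf : ∀ i, e i * f i * e i = f i) (hg : ∀ i, e i * g i * e i = g i) :
    (∑ i, f i) * (∑ i, g i) = ∑ i, f i * g i := by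
  rw [Finset.sum_mul_sum]
  refine Finset.sum_congr rfl fun i _ => Finset.sum_eq_single i (fun j _ hji => ?_) (by simp)
  exact mul_eq_zero_of_corner (he i) (he j) (horth hji.symm) (hf i) (hg j)

theorem mul_sum_mul_of_corner (he : ∀ i, IsIdempotentElem (e i))
    (horth : Pairwise fun i j => e i * e j = 0) (hf : ∀ i, e i * f i * e i = f i) (j : ι) :
    e j * (∑ i, f i) * e j = f j := by
  rw [Finset.mul_sum, Finset.sum_mul, Finset.sum_eq_single j (fun i _ hij => ?_) (by simp)]
  · exact hf j
  · have hej : e j * e j * e j = e j := by rw [(he j).eq, (he j).eq]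
    rw [mul_eq_zero_of_corner (he j) (he i) (horth hij.symm) hej (hf i), zero_mul]

end Corner

section BlockSum

variable {R ι : Type*} [Fintype ι]

def blockSum [AddCommMonoid R] (A : ι → Set R) : Set R :=
  {x | ∃ f : ι → R, (∀ i, f i ∈ A i) ∧ x = ∑ i, f i}

variable {A : ι → Set R}

theorem sum_mem_blockSum [AddCommMonoid R] {f : ι → R} (hf : ∀ i, f i ∈ A i) :
    ∑ i, f i ∈ blockSum A :=
  ⟨f, hf, rfl⟩

theorem mem_blockSum_of_mem [AddCommMonoid R] (h0 : ∀ i, (0 : R) ∈ A i)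
    {j : ι} {a : R} (ha : a ∈ A j) : a ∈ blockSum A := by
  classical
  refine ⟨Pi.single j a, fun i => ?_, by simp⟩
  rcases eq_or_ne i j with rfl | hij
  · simpa using ha
  · simpa [hij] using h0 i

theorem blockSum_subset [AddCommMonoid R] {S : Type*} [SetLike S R] [AddSubmonoidClass S R]
    {s : S} (hA : ∀ i, A i ⊆ s) : blockSum A ⊆ s := by
  rintro _ ⟨f, hf, rfl⟩
  exact sum_mem fun i _ => hA i (hf i)

theorem add_mem_blockSum [AddCommMonoid R] (hA : ∀ i, ∀ x ∈ A i, ∀ y ∈ A i, x + y ∈ A i)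
    {x y : R} (hx : x ∈ blockSum A) (hy : y ∈ blockSum A) : x + y ∈ blockSum A := by
  obtain ⟨f, hf, rfl⟩ := hx
  obtain ⟨g, hg, rfl⟩ := hy
  rw [← Finset.sum_add_distrib]
  exact sum_mem_blockSum fun i => hA i _ (hf i) _ (hg i)

theorem smul_mem_blockSum {𝕜 : Type*} [AddCommMonoid R] [DistribSMul 𝕜 R]
    (hA : ∀ i, ∀ (c : 𝕜), ∀ x ∈ A i, c • x ∈ A i) (c : 𝕜) {x : R} (hx : x ∈ blockSum A) :
    c • x ∈ blockSum A := by
  obtain ⟨f, hf, rfl⟩ := hx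
  rw [Finset.smul_sum]
  exact sum_mem_blockSum fun i => hA i c _ (hf i)

theorem star_mem_blockSum [AddCommMonoid R] [StarAddMonoid R]
    (hA : ∀ i, ∀ x ∈ A i, star x ∈ A i) {x : R} (hx : x ∈ blockSum A) :
    star x ∈ blockSum A := by
  obtain ⟨f, hf, rfl⟩ := hx
  rw [star_sum]
  exact sum_mem_blockSum fun i => hA i _ (hf i)

theorem finiteDimensional_span_blockSum {K : Type*} [Field K] [AddCommGroup R] [Module K R]
    (hA : ∀ i, FiniteDimensional K (Submodule.span K (A i))) :
    FiniteDimensional K (Submodule.span K (blockSum A)) := by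
  refine Submodule.finiteDimensional_of_le
    (Submodule.span_le.2 ?_ : _ ≤ ⨆ i, Submodule.span K (A i))
  rintro _ ⟨f, hf, rfl⟩
  exact sum_mem fun i _ => Submodule.mem_iSup_of_mem i (Submodule.subset_span (hf i))

variable [Semiring R] {e : ι → R}

theorem mul_mem_blockSum (he : ∀ i, IsIdempotentElem (e i))
    (horth : Pairwise fun i j => e i * e j = 0) (hAe : ∀ i, ∀ x ∈ A i, e i * x * e i = x)
    (hA : ∀ i, ∀ x ∈ A i, ∀ y ∈ A i, x * y ∈ A i)
    {x y : R} (hx : x ∈ blockSum A) (hy : y ∈ blockSum A) : x * y ∈ blockSum A := by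
  obtain ⟨f, hf, rfl⟩ := hx
  obtain ⟨g, hg, rfl⟩ := hy
  rw [sum_mul_sum_of_corner he horth (fun i => hAe i _ (hf i)) (fun i => hAe i _ (hg i))]
  exact sum_mem_blockSum fun i => hA i _ (hf i) _ (hg i)

theorem mul_comm_of_mem_blockSum (he : ∀ i, IsIdempotentElem (e i))
    (horth : Pairwise fun i j => e i * e j = 0) (hAe : ∀ i, ∀ x ∈ A i, e i * x * e i = x)
    (hA : ∀ i, ∀ x ∈ A i, ∀ y ∈ A i, x * y = y * x)
    {x y : R} (hx : x ∈ blockSum A) (hy : y ∈ blockSum A) : x * y = y * x := by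
  obtain ⟨f, hf, rfl⟩ := hx
  obtain ⟨g, hg, rfl⟩ := hy
  rw [sum_mul_sum_of_corner he horth (fun i => hAe i _ (hf i)) (fun i => hAe i _ (hg i)),
    sum_mul_sum_of_corner he horth (fun i => hAe i _ (hg i)) (fun i => hAe i _ (hf i))]
  exact Finset.sum_congr rfl fun i _ => hA i _ (hf i) _ (hg i)

theorem compress_mem_of_mem_blockSum (he : ∀ i, IsIdempotentElem (e i))
    (horth : Pairwise fun i j => e i * e j = 0) (hAe : ∀ i, ∀ x ∈ A i, e i * x * e i = x)
    {x : R} (hx : x ∈ blockSum A) (j : ι) : e j * x * e j ∈ A j := by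
  obtain ⟨f, hf, rfl⟩ := hx
  rw [mul_sum_mul_of_corner he horth fun i => hAe i _ (hf i)]
  exact hf j

theorem sum_compress_of_mem_blockSum (he : ∀ i, IsIdempotentElem (e i))
    (horth : Pairwise fun i j => e i * e j = 0) (hAe : ∀ i, ∀ x ∈ A i, e i * x * e i = x)
    {x : R} (hx : x ∈ blockSum A) : ∑ j, e j * x * e j = x := by
  obtain ⟨f, hf, rfl⟩ := hx
  exact Finset.sum_congr rfl fun j _ => mul_sum_mul_of_corner he horth (fun i => hAe i _ (hf i)) j

end BlockSum

namespace HoudayerPopa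

variable {H : Type} [NormedAddCommGroup H] [InnerProductSpace ℂ H]

theorem CondExpOn.apply_mul_E {φ : BH H →ₗ[ℂ] ℂ} {D S : Set (BH H)} (E : CondExpOn φ D S)
    {u a x : BH H} (hu : u ∈ S) (ha : a ∈ S) (hx : x ∈ D) (hax : a * x ∈ D) (hxu : x * u = x)
    (hEu : E.E x * u = E.E x) : φ (a * E.E x) = φ (a * x) :=
  calc φ (a * E.E x) = φ (E.E (a * x * u)) := by rw [E.bimod' a ha x hx u hu, mul_assoc, hEu]
    _ = φ (a * x) := by rw [mul_assoc, hxu, E.preserve' _ hax]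

variable [CompleteSpace H] {M : VonNeumannAlgebra H}

theorem NFState.im_apply_star_mul_self (φ : NFState M) (v : BH H) :
    (φ.toFun (star v * v)).im = 0 :=
  ((Complex.nonneg_iff.1 (φ.pos' v)).2).symm

theorem φnorm_sq (φ : NFState M) (v : BH H) : φnorm φ v ^ 2 = (φ.toFun (star v * v)).re :=
  Real.sq_sqrt (Complex.nonneg_iff.1 (φ.pos' v)).1

theorem NFState.re_apply_ne_zero (φ : NFState M) {p : BH H} (hpM : p ∈ M)
    (hp : IsProjection p) (hp0 : p ≠ 0) : (φ.toFun p).re ≠ 0 := by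
  have hpp : star p * p = p := by rw [hp.1.star_eq, hp.2]
  have him := φ.im_apply_star_mul_self p
  rw [hpp] at him
  exact fun hre => hp0 (φ.faithful' p hpM (hpp.symm ▸ Complex.ext hre him))

theorem φnorm_sum_sq_of_corner (φ : NFState M) {J : Type*} [Fintype J] {e d : J → BH H}
    (he : ∀ j, IsProjection (e j)) (horth : Pairwise fun i j => e i * e j = 0)
    (hd : ∀ j, e j * d j * e j = d j) :
    φnorm φ (∑ j, d j) ^ 2 = ∑ j, φnorm φ (d j) ^ 2 := by
  have hd_star : ∀ j, e j * star (d j) * e j = star (d j) := fun j => by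
    conv_rhs => rw [← hd j]
    simp only [star_mul, (he j).1.star_eq, mul_assoc]
  simp only [φnorm_sq, star_sum, sum_mul_sum_of_corner (fun j => (he j).2) horth hd_star hd,
    map_sum, Complex.re_sum]

theorem compress_mem_cornerSet {e x : BH H} (heM : e ∈ M) (he : IsIdempotentElem e)
    (hx : x ∈ M) : e * x * e ∈ cornerSet M e :=
  ⟨mul_mem (mul_mem heM hx) heM, by simp only [← mul_assoc, he.eq]; rw [mul_assoc, he.eq]⟩

theorem mul_mem_cornerSet {e x y : BH H} (he : IsIdempotentElem e) (hx : x ∈ cornerSet M e)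
    (hy : y ∈ cornerSet M e) : x * y ∈ cornerSet M e := by
  refine ⟨mul_mem hx.1 hy.1, ?_⟩
  rw [← mul_assoc, he.mul_eq_of_corner hx.2, mul_assoc, he.mul_eq_of_corner_right hy.2]

theorem apply_mul_compress_of_mem_stateCentralizer {φ : NFState M} {e a x : BH H}
    (hec : e ∈ stateCentralizer M φ) (he : IsIdempotentElem e) (ha : e * a * e = a)
    (hax : a * x ∈ M) : φ.toFun (a * (e * x * e)) = φ.toFun (a * x) :=
  calc φ.toFun (a * (e * x * e)) = φ.toFun (a * x * e) := by
        rw [← mul_assoc, ← mul_assoc, he.mul_eq_of_corner_right ha]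
    _ = φ.toFun (e * (a * x)) := (hec.2 _ hax).symm
    _ = φ.toFun (a * x) := by rw [← mul_assoc, he.mul_eq_of_corner ha]

theorem CondExpOn.E_eq_of_forall_apply_mul_eq {φ : NFState M} {S : Set (BH H)}
    (E : CondExpOn φ.toFun M S) (hSM : S ⊆ M) (hS1 : 1 ∈ S)
    (hSsub : ∀ a ∈ S, ∀ b ∈ S, a - b ∈ S) (hSstar : ∀ a ∈ S, star a ∈ S) {x y : BH H}
    (hx : x ∈ M) (hy : y ∈ S) (hxy : ∀ c ∈ S, φ.toFun (c * y) = φ.toFun (c * x)) :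
    E.E x = y := by
  have hd : E.E x - y ∈ S := hSsub _ (E.mem' x hx) _ hy
  have hd_star := hSstar _ hd
  refine sub_eq_zero.1 (φ.faithful' _ (hSM hd) ?_)
  rw [mul_sub, map_sub, hxy _ hd_star,
    E.apply_mul_E hS1 hd_star hx (mul_mem (hSM hd_star) hx) (mul_one x) (mul_one _), sub_self]

theorem sub_mem_relComm {S : Set (BH H)} {a b : BH H} (ha : a ∈ relComm S M)
    (hb : b ∈ relComm S M) : a - b ∈ relComm S M :=
  ⟨sub_mem ha.1 hb.1, fun s hs => by rw [mul_sub, sub_mul, ha.2 s hs, hb.2 s hs]⟩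

theorem star_mem_relComm {S : Set (BH H)} (hS : ∀ s ∈ S, star s ∈ S) {c : BH H}
    (hc : c ∈ relComm S M) : star c ∈ relComm S M :=
  ⟨star_mem hc.1, fun s hs => by
    rw [← star_star s, ← star_mul, ← star_mul, hc.2 _ (hS s hs)]⟩

theorem mem_relComm_cornerSet_self {e : BH H} {A : Set (BH H)} (heM : e ∈ M)
    (he : IsIdempotentElem e) (hA : A ⊆ cornerSet M e) : e ∈ relComm A (cornerSet M e) :=
  ⟨⟨heM, by rw [he.eq, he.eq]⟩, fun s hs => by
    rw [he.mul_eq_of_corner_right (hA hs).2, he.mul_eq_of_corner (hA hs).2]⟩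

theorem compress_mem_relComm {e c : BH H} {S A : Set (BH H)} (heM : e ∈ M)
    (he : IsIdempotentElem e) (heS : e ∈ S) (hAS : A ⊆ S) (hA : A ⊆ cornerSet M e)
    (hc : c ∈ relComm S M) : e * c * e ∈ relComm A (cornerSet M e) := by
  refine ⟨compress_mem_cornerSet heM he hc.1, fun s hs => ?_⟩
  have hce : e * c * e = c * e := by rw [hc.2 e heS, mul_assoc, he.eq]
  rw [hce, ← mul_assoc, hc.2 s (hAS hs), mul_assoc, mul_assoc,
    he.mul_eq_of_corner_right (hA hs).2, he.mul_eq_of_corner (hA hs).2]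

theorem sum_compress_of_mem_relComm {J : Type*} [Fintype J] {e : J → BH H} {S : Set (BH H)}
    (he : ∀ j, IsIdempotentElem (e j)) (heS : ∀ j, e j ∈ S) (hsum : ∑ j, e j = 1) {c : BH H}
    (hc : c ∈ relComm S M) : ∑ j, e j * c * e j = c := by
  calc ∑ j, e j * c * e j = ∑ j, c * e j :=
        Finset.sum_congr rfl fun j _ => by rw [hc.2 _ (heS j), mul_assoc, (he j).eq]
    _ = c := by rw [← Finset.mul_sum, hsum, mul_one]

theorem sum_mem_relComm_blockSum {J : Type*} [Fintype J] {e f : J → BH H} {A : J → Set (BH H)}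
    (he : ∀ j, IsIdempotentElem (e j)) (horth : Pairwise fun i j => e i * e j = 0)
    (hA : ∀ j, A j ⊆ cornerSet M (e j)) (hf : ∀ j, f j ∈ relComm (A j) (cornerSet M (e j))) :
    ∑ j, f j ∈ relComm (blockSum A) M := by
  refine ⟨sum_mem fun j _ => (hf j).1.1, ?_⟩
  rintro _ ⟨g, hg, rfl⟩
  rw [sum_mul_sum_of_corner he horth (fun j => (hA j (hg j)).2) (fun j => (hf j).1.2),
    sum_mul_sum_of_corner he horth (fun j => (hf j).1.2) (fun j => (hA j (hg j)).2)]
  exact Finset.sum_congr rfl fun j _ => (hf j).2 _ (hg j)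

theorem CondExpOn.E_eq_sum_of_corner {φ : NFState M} {J : Type*} [Fintype J] {e : J → BH H}
    (hec : ∀ j, e j ∈ stateCentralizer M φ) (he : ∀ j, IsIdempotentElem (e j))
    (horth : Pairwise fun i j => e i * e j = 0) (hsum : ∑ j, e j = 1)
    {S : Set (BH H)} {T : J → Set (BH H)} (hSM : S ⊆ M)
    (hSsub : ∀ a ∈ S, ∀ b ∈ S, a - b ∈ S) (hSstar : ∀ a ∈ S, star a ∈ S)
    (hT : ∀ j, T j ⊆ cornerSet M (e j)) (heT : ∀ j, e j ∈ T j)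
    (hST : ∀ c ∈ S, ∀ j, e j * c * e j ∈ T j) (hS : ∀ c ∈ S, ∑ j, e j * c * e j = c)
    (hTS : ∀ f : J → BH H, (∀ j, f j ∈ T j) → ∑ j, f j ∈ S)
    (E : CondExpOn φ.toFun M S) (F : ∀ j, CondExpOn φ.toFun (cornerSet M (e j)) (T j))
    {x : BH H} (hx : x ∈ M) :
    E.E x = ∑ j, (F j).E (e j * x * e j) := by
  have hxj : ∀ j, e j * x * e j ∈ cornerSet M (e j) :=
    fun j => compress_mem_cornerSet (hec j).1 (he j) hx
  have hFj : ∀ j, (F j).E (e j * x * e j) ∈ T j := fun j => (F j).mem' _ (hxj j)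
  refine E.E_eq_of_forall_apply_mul_eq hSM (hsum ▸ hTS e heT) hSsub hSstar hx (hTS _ hFj)
    fun c hc => ?_
  have hblock : ∀ j, φ.toFun (e j * c * e j * (F j).E (e j * x * e j))
      = φ.toFun (e j * c * e j * x) := fun j => by
    have hcj := hT j (hST c hc j)
    rw [(F j).apply_mul_E (heT j) (hST c hc j) (hxj j) (mul_mem_cornerSet (he j) hcj (hxj j))
      ((he j).mul_eq_of_corner_right (hxj j).2) ((he j).mul_eq_of_corner_right (hT j (hFj j)).2),
      apply_mul_compress_of_mem_stateCentralizer (hec j) (he j) hcj.2 (mul_mem hcj.1 hx)]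
  calc φ.toFun (c * ∑ j, (F j).E (e j * x * e j))
      = ∑ j, φ.toFun (e j * c * e j * (F j).E (e j * x * e j)) := by
        nth_rewrite 1 [← hS c hc]
        rw [sum_mul_sum_of_corner he horth (fun j => (hT j (hST c hc j)).2)
          (fun j => (hT j (hFj j)).2), map_sum]
    _ = ∑ j, φ.toFun (e j * c * e j * x) := Finset.sum_congr rfl fun j _ => hblock j
    _ = φ.toFun (c * x) := by rw [← map_sum, ← Finset.sum_mul, hS c hc]

variable {φ : NFState M} {J : Type*} [Fintype J] {e : J → BH H} {A : J → Set (BH H)}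

theorem isStarSubalgebraSet_blockSum (he : ∀ j, IsIdempotentElem (e j))
    (horth : Pairwise fun i j => e i * e j = 0) (hsum : ∑ j, e j = 1)
    (hAe : ∀ j, ∀ x ∈ A j, e j * x * e j = x) (heA : ∀ j, e j ∈ A j)
    (hAadd : ∀ j, ∀ x ∈ A j, ∀ y ∈ A j, x + y ∈ A j)
    (hAsmul : ∀ j, ∀ (c : ℂ), ∀ x ∈ A j, c • x ∈ A j)
    (hAmul : ∀ j, ∀ x ∈ A j, ∀ y ∈ A j, x * y ∈ A j) (hAstar : ∀ j, ∀ x ∈ A j, star x ∈ A j) :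
    IsStarSubalgebraSet (blockSum A) :=
  ⟨hsum ▸ sum_mem_blockSum heA, fun _ hx _ hy => add_mem_blockSum hAadd hx hy,
    fun c _ => smul_mem_blockSum hAsmul c,
    fun _ hx _ hy => mul_mem_blockSum he horth hAe hAmul hx hy,
    fun _ => star_mem_blockSum hAstar⟩

theorem CondExpOn.E_blockSum_eq_sum (hec : ∀ j, e j ∈ stateCentralizer M φ)
    (he : ∀ j, IsIdempotentElem (e j)) (horth : Pairwise fun i j => e i * e j = 0)
    (hsum : ∑ j, e j = 1) (hA : ∀ j, A j ⊆ cornerSet M (e j)) (heA : ∀ j, e j ∈ A j)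
    (hAadd : ∀ j, ∀ x ∈ A j, ∀ y ∈ A j, x + y ∈ A j)
    (hAsmul : ∀ j, ∀ (c : ℂ), ∀ x ∈ A j, c • x ∈ A j) (hAstar : ∀ j, ∀ x ∈ A j, star x ∈ A j)
    (E : CondExpOn φ.toFun M (blockSum A)) (F : ∀ j, CondExpOn φ.toFun (cornerSet M (e j)) (A j))
    {x : BH H} (hx : x ∈ M) : E.E x = ∑ j, (F j).E (e j * x * e j) := by
  have hAe : ∀ j, ∀ x ∈ A j, e j * x * e j = x := fun j _ hx => (hA j hx).2
  refine E.E_eq_sum_of_corner hec he horth hsum (blockSum_subset fun j _ hx => (hA j hx).1)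
    (fun a ha b hb => ?_) (fun _ => star_mem_blockSum hAstar) hA heA
    (fun _ hc => compress_mem_of_mem_blockSum he horth hAe hc)
    (fun _ => sum_compress_of_mem_blockSum he horth hAe) (fun _ => sum_mem_blockSum) F hx
  rw [sub_eq_add_neg, ← neg_one_smul ℂ b]
  exact add_mem_blockSum hAadd ha (smul_mem_blockSum hAsmul _ hb)

theorem CondExpOn.E_relComm_blockSum_eq_sum (hec : ∀ j, e j ∈ stateCentralizer M φ)
    (he : ∀ j, IsIdempotentElem (e j)) (horth : Pairwise fun i j => e i * e j = 0)
    (hsum : ∑ j, e j = 1) (hA : ∀ j, A j ⊆ cornerSet M (e j)) (heA : ∀ j, e j ∈ A j)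
    (hA0 : ∀ j, (0 : BH H) ∈ A j) (hAstar : ∀ j, ∀ x ∈ A j, star x ∈ A j)
    (E : CondExpOn φ.toFun M (relComm (blockSum A) M))
    (F : ∀ j, CondExpOn φ.toFun (cornerSet M (e j)) (relComm (A j) (cornerSet M (e j))))
    {x : BH H} (hx : x ∈ M) : E.E x = ∑ j, (F j).E (e j * x * e j) := by
  have heAsum : ∀ j, e j ∈ blockSum A := fun j => mem_blockSum_of_mem hA0 (heA j)
  exact E.E_eq_sum_of_corner hec he horth hsum (fun _ hc => hc.1)
    (fun _ ha _ hb => sub_mem_relComm ha hb)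
    (fun _ => star_mem_relComm fun _ => star_mem_blockSum hAstar) (fun _ _ hc => hc.1)
    (fun j => mem_relComm_cornerSet_self (hec j).1 (he j) (hA j))
    (fun _ hc j => compress_mem_relComm (hec j).1 (he j) (heAsum j)
      (fun _ => mem_blockSum_of_mem hA0) (hA j) hc)
    (fun _ => sum_compress_of_mem_relComm he heAsum hsum)
    (fun _ => sum_mem_relComm_blockSum he horth hA) F hx

end HoudayerPopa

theorem stmt0_general
    {H : Type} [NormedAddCommGroup H] [InnerProductSpace ℂ H] [CompleteSpace H]
    (M : VonNeumannAlgebra H) (φ : NFState M)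
    (J : Type) [Fintype J]
    (e : J → BH H)
    (hecent : ∀ j, e j ∈ stateCentralizer M φ)
    (heproj : ∀ j, IsProjection (e j)) (hene : ∀ j, e j ≠ 0)
    (horth : ∀ i j, i ≠ j → e i * e j = 0)
    (hsum : ∑ j, e j = 1)
    (A : J → Set (BH H))
    (hAcorner : ∀ j, A j ⊆ cornerSet M (e j))
    (hAunit : ∀ j, e j ∈ A j)
    (hAadd : ∀ j, ∀ x ∈ A j, ∀ y ∈ A j, x + y ∈ A j)
    (hAsmul : ∀ j, ∀ (c : ℂ), ∀ x ∈ A j, c • x ∈ A j)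
    (hAmul : ∀ j, ∀ x ∈ A j, ∀ y ∈ A j, x * y ∈ A j)
    (hAstar : ∀ j, ∀ x ∈ A j, star x ∈ A j)
    (hAab : ∀ j, IsAbelianSet (A j))
    (hAfd : ∀ j, FiniteDimensional ℂ (Submodule.span ℂ (A j)))
    (Asum : Set (BH H))
    (hAsum : Asum = {x | ∃ f : J → BH H, (∀ j, f j ∈ A j) ∧ x = ∑ j, f j}) :
    (Asum ⊆ (M : Set (BH H)) ∧ IsStarSubalgebraSet Asum ∧ IsAbelianSet Asum ∧
      (∀ j, e j ∈ Asum) ∧ FiniteDimensional ℂ (Submodule.span ℂ Asum)) ∧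
    (∀ E1 : CondExpOn φ.toFun (M : Set (BH H)) (relComm Asum (M : Set (BH H))),
     ∀ E2 : CondExpOn φ.toFun (M : Set (BH H)) Asum,
     ∀ F1 : (∀ j, CondExpOn φ.toFun (cornerSet M (e j))
        (relComm (A j) (cornerSet M (e j)))),
     ∀ F2 : (∀ j, CondExpOn φ.toFun (cornerSet M (e j)) (A j)),
     ∀ x ∈ M,
      (φnorm φ (E1.E x - E2.E x)) ^ 2 =
        ∑ j, (φ.toFun (e j)).re *
          ((φnorm φ ((F1 j).E (e j * x * e j) - (F2 j).E (e j * x * e j))) ^ 2 /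
            (φ.toFun (e j)).re)) := by
  obtain rfl : Asum = blockSum A := hAsum
  have he : ∀ j, IsIdempotentElem (e j) := fun j => (heproj j).2
  have horth' : Pairwise fun i j => e i * e j = 0 := horth
  have hAe : ∀ j, ∀ x ∈ A j, e j * x * e j = x := fun j _ hx => (hAcorner j hx).2
  have hA0 : ∀ j, (0 : BH H) ∈ A j := fun j => by simpa using hAsmul j 0 _ (hAunit j)
  refine ⟨⟨blockSum_subset fun j _ hx => (hAcorner j hx).1,
      isStarSubalgebraSet_blockSum he horth' hsum hAe hAunit hAadd hAsmul hAmul hAstar,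
      fun _ hx _ hy => mul_comm_of_mem_blockSum he horth' hAe hAab hx hy,
      fun j => mem_blockSum_of_mem hA0 (hAunit j), finiteDimensional_span_blockSum hAfd⟩,
    fun E1 E2 F1 F2 x hx => ?_⟩
  have hblock : ∀ j, e j * ((F1 j).E (e j * x * e j) - (F2 j).E (e j * x * e j)) * e j
      = (F1 j).E (e j * x * e j) - (F2 j).E (e j * x * e j) := fun j => by
    have hxj := compress_mem_cornerSet (hecent j).1 (he j) hx
    rw [mul_sub, sub_mul, ((F1 j).mem' _ hxj).1.2, hAe j _ ((F2 j).mem' _ hxj)]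
  rw [E1.E_relComm_blockSum_eq_sum hecent he horth' hsum hAcorner hAunit hA0 hAstar F1 hx,
    E2.E_blockSum_eq_sum hecent he horth' hsum hAcorner hAunit hAadd hAsmul hAstar F2 hx,
    ← Finset.sum_sub_distrib, φnorm_sum_sq_of_corner φ heproj horth' hblock]
  exact Finset.sum_congr rfl fun j _ =>
    (mul_div_cancel₀ _ (φ.re_apply_ne_zero (hecent j).1 (heproj j) (hene j))).symm

/-- direct sums of corner expectations (Lemma 2.1 of the paper). -/
theorem stmt0
    {H : Type} [NormedAddCommGroup H] [InnerProductSpace ℂ H] [CompleteSpace H]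
    (M : VonNeumannAlgebra H) (φ : NFState M)
    (J : Type) [Fintype J] [Nonempty J]
    (e : J → BH H)
    (hecent : ∀ j, e j ∈ stateCentralizer M φ)
    (heproj : ∀ j, IsProjection (e j)) (hene : ∀ j, e j ≠ 0)
    (horth : ∀ i j, i ≠ j → e i * e j = 0)
    (hsum : ∑ j, e j = 1)
    (A : J → Set (BH H))
    (hAcorner : ∀ j, A j ⊆ cornerSet M (e j))
    (hAunit : ∀ j, e j ∈ A j)
    (hAadd : ∀ j, ∀ x ∈ A j, ∀ y ∈ A j, x + y ∈ A j)
    (hAsmul : ∀ j, ∀ (c : ℂ), ∀ x ∈ A j, c • x ∈ A j)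
    (hAmul : ∀ j, ∀ x ∈ A j, ∀ y ∈ A j, x * y ∈ A j)
    (hAstar : ∀ j, ∀ x ∈ A j, star x ∈ A j)
    (hAab : ∀ j, IsAbelianSet (A j))
    (hAfd : ∀ j, FiniteDimensional ℂ (Submodule.span ℂ (A j)))
    (Asum : Set (BH H))
    (hAsum : Asum = {x | ∃ f : J → BH H, (∀ j, f j ∈ A j) ∧ x = ∑ j, f j}) :
    (Asum ⊆ (M : Set (BH H)) ∧ IsStarSubalgebraSet Asum ∧ IsAbelianSet Asum ∧
      (∀ j, e j ∈ Asum) ∧ FiniteDimensional ℂ (Submodule.span ℂ Asum)) ∧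
    (∀ E1 : CondExpOn φ.toFun (M : Set (BH H)) (relComm Asum (M : Set (BH H))),
     ∀ E2 : CondExpOn φ.toFun (M : Set (BH H)) Asum,
     ∀ F1 : (∀ j, CondExpOn φ.toFun (cornerSet M (e j))
        (relComm (A j) (cornerSet M (e j)))),
     ∀ F2 : (∀ j, CondExpOn φ.toFun (cornerSet M (e j)) (A j)),
     ∀ x ∈ M,
      (φnorm φ (E1.E x - E2.E x)) ^ 2 =
        ∑ j, (φ.toFun (e j)).re *
          ((φnorm φ ((F1 j).E (e j * x * e j) - (F2 j).E (e j * x * e j))) ^ 2 /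
            (φ.toFun (e j)).re)) :=
  stmt0_general M φ J e hecent heproj hene horth hsum A hAcorner hAunit hAadd hAsmul hAmul hAstar
    hAab hAfd Asum hAsum
end
end

section
/- Let M be a σ-finite von Neumann algebra, φ a normal faithful state on M, and N ⊆ M_φ a von Neumann subalgebra with N' ∩ M ⊆ N. For any projection e ∈ N, we have eNe ⊆ (eMe)_{φ_e} and (eNe)' ∩ eMe ⊆ eNe, where φ_e = φ(e·e)/φ(e). -/
open scoped ComplexOrder
open Filter

noncomputable section

/-!
An element `x ∈ eMe` commuting with `eNe` extends to an operator `T ∈ N' ∩ M` with `Te = x`: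
set `T (∑ bᵢ e ξᵢ) := ∑ bᵢ x ξᵢ` for `bᵢ ∈ N` and `T = 0` on the orthogonal complement.
`T` is well defined and bounded because, writing `Gᵢⱼ = e bᵢ* bⱼ e ∈ eNe`,
`‖x‖² ‖∑ bᵢ e ξᵢ‖² - ‖∑ bᵢ x ξᵢ‖² = ∑ ⟪ξᵢ, Gᵢⱼ (‖x‖² - x*x) ξⱼ⟫ = ‖∑ bᵢ e y ξᵢ‖² ≥ 0`
with `y = (‖x‖² - x*x)^{1/2}`, which commutes with every `Gᵢⱼ`. On the vectors `∑ bᵢ e ξᵢ`,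
`N` acts by relabelling the `bᵢ` and `M'` by acting on the `ξᵢ`; hence `T` commutes with `N` and
with `M'`, so `T ∈ N' ∩ M ⊆ N` by the bicommutant theorem, and `x = eTe ∈ eNe`.
-/

open scoped InnerProductSpace

section SumApply

variable {H ι : Type*} [NormedAddCommGroup H] [InnerProductSpace ℂ H]

noncomputable def sumApply (r : ι → H →L[ℂ] H) : (ι →₀ H) →ₗ[ℂ] H :=
  Finsupp.lsum ℂ fun i => (r i : H →ₗ[ℂ] H)

lemma sumApply_single (r : ι → H →L[ℂ] H) (i : ι) (ξ : H) :
    sumApply r (Finsupp.single i ξ) = r i ξ := by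
  simp [sumApply]

lemma sumApply_mapRange {r : ι → H →L[ℂ] H} {z : H →L[ℂ] H} (hz : ∀ i, Commute z (r i))
    (f : ι →₀ H) : sumApply r (f.mapRange z (map_zero z)) = z (sumApply r f) := by
  simp only [sumApply, Finsupp.lsum_apply]
  rw [Finsupp.sum_mapRange_index (fun i => map_zero _), Finsupp.sum, Finsupp.sum, map_sum]
  exact Finset.sum_congr rfl fun i _ => DFunLike.congr_fun (hz i).eq.symm (f i)

lemma sumApply_mapDomain {r : ι → H →L[ℂ] H} {s : H →L[ℂ] H} {σ : ι → ι}
    (hσ : ∀ i, r (σ i) = s * r i) (f : ι →₀ H) :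
    sumApply r (f.mapDomain σ) = s (sumApply r f) := by
  simp only [sumApply, Finsupp.lsum_apply]
  rw [Finsupp.sum_mapDomain_index (fun i => map_zero _) (fun i => map_add _), Finsupp.sum,
    Finsupp.sum, map_sum]
  exact Finset.sum_congr rfl fun i _ => DFunLike.congr_fun (hσ i) (f i)

end SumApply

section Gram

variable {H ι : Type*} [NormedAddCommGroup H] [InnerProductSpace ℂ H] [CompleteSpace H]

lemma inner_sum_apply_sum_apply (r : ι → H →L[ℂ] H) (a b : H →L[ℂ] H)
    (s : Finset ι) (ξ : ι → H) :
    ⟪∑ i ∈ s, r i (a (ξ i)), ∑ j ∈ s, r j (b (ξ j))⟫_ℂ =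
      ∑ i ∈ s, ∑ j ∈ s, ⟪ξ i, (star a * (star (r i) * r j) * b) (ξ j)⟫_ℂ := by
  rw [sum_inner]
  refine Finset.sum_congr rfl fun i _ => ?_
  rw [inner_sum]
  refine Finset.sum_congr rfl fun j _ => ?_
  simp only [ContinuousLinearMap.star_eq_adjoint, ContinuousLinearMap.mul_def,
    ContinuousLinearMap.comp_apply, ContinuousLinearMap.adjoint_inner_right]

lemma norm_sq_sum_apply (r : ι → H →L[ℂ] H) {a : H →L[ℂ] H}
    (ha : ∀ i j, Commute a (star (r i) * r j)) (s : Finset ι) (ξ : ι → H) :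
    (‖∑ i ∈ s, r i (a (ξ i))‖ ^ 2 : ℂ) =
      ∑ i ∈ s, ∑ j ∈ s, ⟪ξ i, (star (r i) * r j * (star a * a)) (ξ j)⟫_ℂ := by
  have has : ∀ i j, Commute (star a) (star (r i) * r j) := fun i j => by
    simpa [star_mul] using (ha j i).star_star
  refine (inner_self_eq_norm_sq_to_K (𝕜 := ℂ) (∑ i ∈ s, r i (a (ξ i)))).symm.trans ?_
  rw [inner_sum_apply_sum_apply]
  refine Finset.sum_congr rfl fun i _ => Finset.sum_congr rfl fun j _ => ?_
  rw [(has i j).eq, mul_assoc]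

lemma norm_sum_apply_le (r : ι → H →L[ℂ] H) {x : H →L[ℂ] H}
    (hx : ∀ i j, Commute x (star (r i) * r j)) (s : Finset ι) (ξ : ι → H) :
    ‖∑ i ∈ s, r i (x (ξ i))‖ ≤ ‖x‖ * ‖∑ i ∈ s, r i (ξ i)‖ := by
  set d := algebraMap ℝ (H →L[ℂ] H) (‖x‖ ^ 2) - star x * x
  have hd : 0 ≤ d := sub_nonneg.mpr CStarAlgebra.star_mul_le_algebraMap_norm_sq
  set y := CFC.sqrt d
  have hy : star y * y = d := by
    rw [(CFC.sqrt_nonneg d).isSelfAdjoint.star_eq, CFC.sqrt_mul_sqrt_self d]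
  have htG : ∀ i j, Commute (star x * x) (star (r i) * r j) := fun i j =>
    ((by simpa [star_mul] using (hx j i).star_star) : Commute (star x) _).mul_left (hx i j)
  have hyG : ∀ i j, Commute y (star (r i) * r j) := fun i j => by
    simp only [y, CFC.sqrt_eq_cfc]
    exact ((Algebra.commute_algebraMap_left _ _).sub_left (htG i j)).cfc_nnreal _
  have hpyth : ‖∑ i ∈ s, r i (x (ξ i))‖ ^ 2 + ‖∑ i ∈ s, r i (y (ξ i))‖ ^ 2 =
      (‖x‖ * ‖∑ i ∈ s, r i (ξ i)‖) ^ 2 := by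
    have h1 := norm_sq_sum_apply r (a := 1) (fun i j => Commute.one_left _) s ξ
    simp only [one_apply_eq_self, star_one, mul_one] at h1
    have hsum : star x * x + d = algebraMap ℝ _ (‖x‖ ^ 2) := add_sub_cancel _ _
    apply Complex.ofReal_injective
    push_cast
    rw [norm_sq_sum_apply r hx, norm_sq_sum_apply r hyG, hy, mul_pow, h1,
      ← Finset.sum_add_distrib, Finset.mul_sum]
    refine Finset.sum_congr rfl fun i _ => ?_
    rw [← Finset.sum_add_distrib, Finset.mul_sum]
    refine Finset.sum_congr rfl fun j _ => ?_
    rw [← inner_add_right, ← add_apply, ← mul_add, hsum, Algebra.algebraMap_eq_smul_one,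
      mul_smul_comm, mul_one, smul_apply, ← Complex.coe_smul, inner_smul_right]
    push_cast
    rfl
  exact le_of_sq_le_sq (by nlinarith) (by positivity)

lemma norm_sumApply_mul_le (r : ι → H →L[ℂ] H) {x : H →L[ℂ] H}
    (hx : ∀ i j, Commute x (star (r i) * r j)) (f : ι →₀ H) :
    ‖sumApply (fun i => r i * x) f‖ ≤ ‖x‖ * ‖sumApply r f‖ :=
  norm_sum_apply_le r hx f.support f

end Gram

section Extension

variable {𝕜 E H F : Type*} [RCLike 𝕜] [AddCommGroup E] [Module 𝕜 E]
  [NormedAddCommGroup H] [InnerProductSpace 𝕜 H] [CompleteSpace H]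
  [NormedAddCommGroup F] [NormedSpace 𝕜 F] [CompleteSpace F]

open Submodule in
lemma exists_clm_apply_eq_of_norm_le (π : E →ₗ[𝕜] H) (τ : E →ₗ[𝕜] F) (C : ℝ)
    (hC : ∀ f, ‖τ f‖ ≤ C * ‖π f‖) :
    ∃ T : H →L[𝕜] F, (∀ f, T (π f) = τ f) ∧ ∀ k ∈ (LinearMap.range π)ᗮ, T k = 0 := by
  set W := LinearMap.range π
  -- extend `τ ⊕ 0` along `π ⊕ id : E × Wᗮ → H`, whose range `W ⊔ Wᗮ` is dense
  set ι : E × Wᗮ →ₗ[𝕜] H := π.coprod Wᗮ.subtype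
  set τ' : E × Wᗮ →ₗ[𝕜] F := τ ∘ₗ LinearMap.fst 𝕜 E Wᗮ
  have hdense : DenseRange ι := by
    have : (LinearMap.range ι).topologicalClosure = ⊤ := by
      rw [topologicalClosure_eq_top_iff, LinearMap.range_coprod, range_subtype,
        ← inf_orthogonal, ← disjoint_iff]
      exact orthogonal_disjoint Wᗮ
    rw [DenseRange, ← LinearMap.coe_range]
    exact dense_iff_topologicalClosure_eq_top.mpr this
  have hbound : ∀ p, ‖τ' p‖ ≤ max C 0 * ‖ι p‖ := by
    rintro ⟨f, k⟩
    have hπk : ‖π f‖ ≤ ‖π f + k‖ := by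
      have := norm_add_sq_eq_norm_sq_add_norm_sq_of_inner_eq_zero _ _
        (k.2 (π f) (LinearMap.mem_range_self π f))
      nlinarith [norm_nonneg (π f), norm_nonneg (π f + k), norm_nonneg (k : H)]
    calc ‖τ f‖ ≤ C * ‖π f‖ := hC f
      _ ≤ max C 0 * ‖π f + k‖ :=
        mul_le_mul (le_max_left C 0) hπk (norm_nonneg _) (le_max_right C 0)
  refine ⟨τ'.extendOfNorm ι, fun f => ?_, fun k hk => ?_⟩
  · simpa [ι, τ'] using LinearMap.extendOfNorm_eq hdense ⟨_, hbound⟩ (f, 0)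
  · simpa [ι, τ'] using LinearMap.extendOfNorm_eq hdense ⟨_, hbound⟩ (0, ⟨k, hk⟩)

open Submodule in
lemma commute_of_intertwining {π τ : E →ₗ[𝕜] H} {T : H →L[𝕜] H}
    (hT : ∀ f, T (π f) = τ f) (hT0 : ∀ k ∈ (LinearMap.range π)ᗮ, T k = 0)
    {y : H →L[𝕜] H} {σ : E → E} (hπ : ∀ f, π (σ f) = y (π f)) (hτ : ∀ f, τ (σ f) = y (τ f))
    (hπ' : ∀ f, star y (π f) ∈ LinearMap.range π) :
    Commute y T := by
  set W := LinearMap.range π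
  have hW : Set.EqOn (y ∘ T) (T ∘ y) W := by
    rintro _ ⟨f, rfl⟩
    simp only [Function.comp_apply, hT, ← hπ, ← hτ]
  have hK : Set.EqOn (y ∘ T) (T ∘ y) W.topologicalClosure := by
    rw [topologicalClosure_coe]
    exact hW.closure (by fun_prop) (by fun_prop)
  have hWperp : ∀ k ∈ Wᗮ, y k ∈ Wᗮ := by
    rintro k hk _ ⟨f, rfl⟩
    rw [ContinuousLinearMap.star_eq_adjoint] at hπ'
    rw [← ContinuousLinearMap.adjoint_inner_left]
    exact hk _ (hπ' f)
  ext ζ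
  obtain ⟨w, hw, k, hk, rfl⟩ := W.topologicalClosure.exists_add_mem_mem_orthogonal ζ
  rw [orthogonal_closure] at hk
  simp only [ContinuousLinearMap.mul_def, ContinuousLinearMap.comp_apply, map_add]
  rw [hT0 k hk, hT0 _ (hWperp k hk), map_zero]
  exact congrArg (· + 0) (hK hw)

end Extension

section Intertwining

variable {H ι : Type*} [NormedAddCommGroup H] [InnerProductSpace ℂ H] [CompleteSpace H]
  {r : ι → H →L[ℂ] H} {x T : H →L[ℂ] H}

lemma commute_of_commute_sumApply (hT : ∀ f, T (sumApply r f) = sumApply (fun i => r i * x) f)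
    (hT0 : ∀ k ∈ (LinearMap.range (sumApply r))ᗮ, T k = 0) {z : H →L[ℂ] H}
    (hz : ∀ i, Commute z (r i)) (hzx : Commute z x) (hz' : ∀ i, Commute (star z) (r i)) :
    Commute z T :=
  commute_of_intertwining hT hT0 (sumApply_mapRange hz)
    (sumApply_mapRange fun i => (hz i).mul_right hzx) fun f => ⟨_, sumApply_mapRange hz' f⟩

lemma commute_of_relabel_sumApply (hT : ∀ f, T (sumApply r f) = sumApply (fun i => r i * x) f)
    (hT0 : ∀ k ∈ (LinearMap.range (sumApply r))ᗮ, T k = 0) {s : H →L[ℂ] H} {σ σ' : ι → ι}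
    (hσ : ∀ i, r (σ i) = s * r i) (hσ' : ∀ i, r (σ' i) = star s * r i) :
    Commute s T :=
  commute_of_intertwining hT hT0 (sumApply_mapDomain hσ)
    (sumApply_mapDomain fun i => by rw [hσ, mul_assoc]) fun f => ⟨_, sumApply_mapDomain hσ' f⟩

end Intertwining

namespace HoudayerPopa

variable {H : Type} [NormedAddCommGroup H] [InnerProductSpace ℂ H] [CompleteSpace H]

theorem relComm_compression_subset (M : VonNeumannAlgebra H) {N : Set (BH H)}
    (hN : IsStarSubalgebraSet N) (hNM : N ⊆ (M : Set (BH H))) {e : BH H} (he : e ∈ N)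
    (hproj : IsProjection e) :
    relComm {x | ∃ a ∈ N, x = e * a * e} (cornerSet M e) ⊆
      {x | ∃ T ∈ relComm N (M : Set (BH H)), x = e * T * e} := by
  rintro x ⟨⟨hxM, hxe⟩, hxc⟩
  obtain ⟨-, -, -, hmul, hstar⟩ := hN
  obtain ⟨hesa, hee⟩ := hproj
  have hex : e * x = x := by rw [← hxe, ← mul_assoc, ← mul_assoc, hee]
  set r : N → BH H := fun b => b.1 * e
  have hxG : ∀ b c, Commute x (star (r b) * r c) := fun b c => by
    have hG : star (r b) * r c = e * (star b.1 * c.1) * e := by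
      simp only [r, star_mul, hesa.star_eq, mul_assoc]
    rw [hG]
    exact (hxc _ ⟨_, hmul _ (hstar _ b.2) _ c.2, rfl⟩).symm
  obtain ⟨T, hT, hT0⟩ := exists_clm_apply_eq_of_norm_le (sumApply r)
    (sumApply fun b => r b * x) ‖x‖ (norm_sumApply_mul_le r hxG)
  have hM' : ∀ z ∈ Set.centralizer (M : Set (BH H)), Commute z T := by
    have hr : ∀ w ∈ Set.centralizer (M : Set (BH H)), ∀ b, Commute w (r b) := fun w hw b =>
      Commute.mul_right (hw _ (hNM b.2)).symm (hw _ (hNM he)).symm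
    intro z hz
    exact commute_of_commute_sumApply hT hT0 (hr z hz) (hz x hxM).symm
      (hr _ (Set.star_mem_centralizer' (fun _ => star_mem) hz))
  have hN' : ∀ s ∈ N, Commute s T := fun s hs =>
    commute_of_relabel_sumApply hT hT0 (σ := fun b => ⟨s * b, hmul _ hs _ b.2⟩)
      (σ' := fun b => ⟨star s * b, hmul _ (hstar s hs) _ b.2⟩)
      (fun b => mul_assoc _ _ _) (fun b => mul_assoc _ _ _)
  have hTe : T * e = x := by
    ext ζ
    have := hT (Finsupp.single ⟨e, he⟩ ζ)
    rw [sumApply_single, sumApply_single] at this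
    simp only [r, hee, hex] at this
    exact this
  refine ⟨T, ⟨?_, fun s hs => (hN' s hs).eq⟩, ?_⟩
  · rw [← M.centralizer_centralizer]
    exact fun z hz => (hM' z hz).eq
  · rw [(hN' e he).eq, mul_assoc, hee, hTe]

end HoudayerPopa

open HoudayerPopa

/-- Popa's Lemma 2.1 in [Po81]: compression by a projection `e ∈ N ⊆ M_φ`
preserves both the inclusion into the centralizer and the relative commutant condition
`N' ∩ M ⊆ N`. -/
theorem stmt7
    {H : Type} [NormedAddCommGroup H] [InnerProductSpace ℂ H] [CompleteSpace H]
    (M : VonNeumannAlgebra H) (φ : NFState M)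
    (N : Set (BH H)) (hNsub : IsStarSubalgebraSet N)
    (hNcent : N ⊆ stateCentralizer M φ)
    (hNcomm : relComm N (M : Set (BH H)) ⊆ N)
    (e : BH H) (he : e ∈ N) (heproj : IsProjection e) :
    (∀ a ∈ N, e * a * e ∈ cornerSet M e ∧
      ∀ y ∈ cornerSet M e, φ.toFun ((e * a * e) * y) = φ.toFun (y * (e * a * e))) ∧
    relComm {x | ∃ a ∈ N, x = e * a * e} (cornerSet M e) ⊆
      {x | ∃ a ∈ N, x = e * a * e} := by
  have hmul := hNsub.2.2.2.1
  have hNM : N ⊆ (M : Set (BH H)) := fun a ha => (hNcent ha).1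
  refine ⟨fun a ha => ?_, ?_⟩
  · have heae : e * a * e ∈ N := hmul _ (hmul e he a ha) e he
    refine ⟨⟨hNM heae, ?_⟩, fun y hy => (hNcent heae).2 y hy.1⟩
    simp only [← mul_assoc, heproj.2]
    rw [mul_assoc _ e e, heproj.2]
  · intro x hx
    obtain ⟨T, hT, rfl⟩ := relComm_compression_subset M hNsub hNM he heproj hx
    exact ⟨T, hNcomm hT, rfl⟩
end
end

section
/- Let M be a type III₁ factor with separable predual and φ, ψ two normal faithful states on M. If the bicentralizer B(M,φ) = ℂ1, then B(M,ψ) = ℂ1. (Independence of CBP from the choice of state, via Connes–Størmer transitivity.) -/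
open scoped ComplexOrder
open Filter

noncomputable section

/-! By Connes–Størmer transitivity there are unitaries `u_k ∈ M` with `φ ∘ Ad u_k → ψ` in norm.
Fix `a ∈ B(M, ψ)` and put `T_k = u_k a u_k*`. The unitaries `u_l* u_k` are asymptotically
`ψ`-central, so `(T_k)` is Cauchy for `‖·‖_φ`; and pulling a `φ`-almost central `x` back to the
`ψ`-almost central `u_k* x u_k` shows that `T_k` asymptotically commutes with `x` in `‖·‖_φ`,
uniformly in `k`. Both estimates pass to a weak operator cluster point `Λ ∈ M` of the bounded
sequence `(T_k)`, because `‖·‖_φ` is weakly lower semicontinuous. Hence `Λ ∈ B(M, φ) = ℂ1`, say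
`Λ = c`, and `‖a - c‖_ψ ≈ ‖T_k - c‖_φ ≈ ‖T_k - Λ‖_φ` is arbitrarily small, so `a = c` by
faithfulness of `ψ`. -/

open HoudayerPopa
open scoped InnerProductSpace Topology
open Filter

lemma Filter.Tendsto.eventually_mul_const_lt {α : Type*} {l : Filter α} {ε : α → ℝ}
    (hε : Tendsto ε l (𝓝 0)) (c : ℝ) {η : ℝ} (hη : 0 < η) : ∀ᶠ k in l, ε k * c < η :=
  (hε.mul_const c).eventually (gt_mem_nhds (by rwa [zero_mul]))

section InnerProduct

variable {E : Type*} [NormedAddCommGroup E] [InnerProductSpace ℂ E]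

lemma norm_inner_apply_self_le (x : E →L[ℂ] E) (v : E) : ‖⟪v, x v⟫_ℂ‖ ≤ ‖x‖ * ‖v‖ ^ 2 :=
  calc ‖⟪v, x v⟫_ℂ‖ ≤ ‖v‖ * (‖x‖ * ‖v‖) :=
        (norm_inner_le_norm _ _).trans (by gcongr; exact x.le_opNorm _)
    _ = ‖x‖ * ‖v‖ ^ 2 := by ring

lemma summable_inner_apply {ξ : ℕ → E} (hξ : Summable fun n => ‖ξ n‖ ^ 2) (x : E →L[ℂ] E) :
    Summable fun n => ⟪ξ n, x (ξ n)⟫_ℂ :=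
  .of_norm (.of_nonneg_of_le (fun _ => norm_nonneg _) (fun _ => norm_inner_apply_self_le x _)
    (hξ.mul_left ‖x‖))

lemma summable_norm_apply_sq {ξ : ℕ → E} (hξ : Summable fun n => ‖ξ n‖ ^ 2) (x : E →L[ℂ] E) :
    Summable fun n => ‖x (ξ n)‖ ^ 2 :=
  .of_nonneg_of_le (fun _ => sq_nonneg _)
    (fun _ => (pow_le_pow_left₀ (norm_nonneg _) (x.le_opNorm _) 2).trans_eq (mul_pow _ _ 2))
    (hξ.mul_left (‖x‖ ^ 2))

lemma norm_sq_le_of_tendsto_inner {ι : Type*} {l : Filter ι} [l.NeBot] {x : E} {y : ι → E}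
    (h : Tendsto (fun i => ⟪x, y i⟫_ℂ) l (𝓝 ⟪x, x⟫_ℂ)) {B : ℝ}
    (hB : ∀ᶠ i in l, ‖y i‖ ^ 2 ≤ B) : ‖x‖ ^ 2 ≤ B := by
  have hB0 : 0 ≤ B := let ⟨_, hi⟩ := hB.exists; (sq_nonneg _).trans hi
  have hle : ‖x‖ ^ 2 ≤ ‖x‖ * √B := by
    have hx : ‖⟪x, x⟫_ℂ‖ = ‖x‖ ^ 2 := by simp [inner_self_eq_norm_sq_to_K]
    refine hx ▸ le_of_tendsto h.norm (hB.mono fun i hi => ?_)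
    exact (norm_inner_le_norm _ _).trans
      (by gcongr; exact (Real.le_sqrt (norm_nonneg _) hB0).2 hi)
  nlinarith [Real.sq_sqrt hB0, Real.sqrt_nonneg B, norm_nonneg x]

end InnerProduct

section WeakOperatorTopology

open ContinuousLinearMapWOT

variable {E : Type*} [NormedAddCommGroup E] [InnerProductSpace ℂ E] [CompleteSpace E]

/-- Closed balls of `B(E)` are compact in the weak operator topology, in the form of existence of
limits along ultrafilters. -/
lemma exists_tendsto_wot_of_norm_le {ι : Type*} (𝔘 : Ultrafilter ι) {T : ι → E →L[ℂ] E} {C : ℝ}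
    (hT : ∀ i, ‖T i‖ ≤ C) : ∃ Λ : E →L[ℂ] E, Tendsto (fun i => ofCLM (T i)) 𝔘 (𝓝 (ofCLM Λ)) := by
  -- Tychonoff for the matrix coefficients `⟪v, T i w⟫`, then Riesz for the limiting bounded
  -- sesquilinear form.
  set K : Set (E × E → ℂ) := Set.univ.pi fun p : E × E => Metric.closedBall 0 (C * ‖p.1‖ * ‖p.2‖)
  have hTK : ∀ i, (fun p : E × E => ⟪p.1, T i p.2⟫_ℂ) ∈ K := fun i p _ => by
    rw [mem_closedBall_zero_iff]
    calc ‖⟪p.1, T i p.2⟫_ℂ‖ ≤ ‖p.1‖ * (‖T i‖ * ‖p.2‖) :=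
          (norm_inner_le_norm _ _).trans (by gcongr; exact (T i).le_opNorm _)
      _ = ‖T i‖ * ‖p.1‖ * ‖p.2‖ := by ring
      _ ≤ C * ‖p.1‖ * ‖p.2‖ := by gcongr; exact hT i
  have hK : IsCompact K := isCompact_univ_pi fun _ => isCompact_closedBall _ _
  obtain ⟨f, hfK, hf⟩ := hK.ultrafilter_le_nhds (𝔘.map fun i (p : E × E) => ⟪p.1, T i p.2⟫_ℂ)
    (by rw [Ultrafilter.coe_map, le_principal_iff, mem_map]; exact univ_mem' hTK)
  rw [Ultrafilter.coe_map] at hf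
  have hlim : ∀ v w, Tendsto (fun i => ⟪v, T i w⟫_ℂ) 𝔘 (𝓝 (f (v, w))) :=
    fun v w => tendsto_pi_nhds.1 hf (v, w)
  let B : E →L⋆[ℂ] E →L[ℂ] ℂ := LinearMap.mkContinuous₂
    (LinearMap.mk₂'ₛₗ (starRingEnd ℂ) (RingHom.id ℂ) (fun v w => f (v, w))
      (fun v₁ v₂ w => tendsto_nhds_unique (hlim (v₁ + v₂) w)
        (by simpa only [inner_add_left] using (hlim v₁ w).add (hlim v₂ w)))
      (fun c v w => tendsto_nhds_unique (hlim (c • v) w)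
        (by simpa only [inner_smul_left, smul_eq_mul] using (hlim v w).const_mul _))
      (fun v w₁ w₂ => tendsto_nhds_unique (hlim v (w₁ + w₂))
        (by simpa only [map_add, inner_add_right] using (hlim v w₁).add (hlim v w₂)))
      (fun c v w => tendsto_nhds_unique (hlim v (c • w))
        (by simpa only [map_smul, inner_smul_right, smul_eq_mul, RingHom.id_apply]
          using (hlim v w).const_mul c)))
    C (fun v w => mem_closedBall_zero_iff.1 (hfK (v, w) trivial))
  refine ⟨ContinuousLinearMap.adjoint (InnerProductSpace.continuousLinearMapOfBilin B), ?_⟩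
  refine tendsto_iff_forall_inner_apply_tendsto.2 fun w v => ?_
  simpa [ContinuousLinearMap.adjoint_inner_right, B] using hlim v w

lemma VonNeumannAlgebra.mem_of_tendsto_wot (M : VonNeumannAlgebra E) {ι : Type*} {l : Filter ι}
    [l.NeBot] {T : ι → E →L[ℂ] E} (hT : ∀ i, T i ∈ M) {Λ : E →L[ℂ] E}
    (h : Tendsto (fun i => ofCLM (T i)) l (𝓝 (ofCLM Λ))) : Λ ∈ M := by
  rw [← SetLike.mem_coe, ← M.centralizer_centralizer]
  intro s hs
  apply ofCLM_injective
  rw [ofCLM_mul, ofCLM_mul]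
  refine tendsto_nhds_unique (h.const_mul (ofCLM s)) ?_
  simpa only [← ofCLM_mul, hs (T _) (hT _)] using h.mul_const (ofCLM s)

end WeakOperatorTopology

section Unitary

variable {R : Type*} [Monoid R] [StarMul R] {u : R}

lemma mul_star_mul_cancel_left (hu : u ∈ unitary R) (w : R) : u * (star u * w) = w := by
  rw [← mul_assoc, Unitary.mul_star_self_of_mem hu, one_mul]

lemma star_mul_mul_cancel_left (hu : u ∈ unitary R) (w : R) : star u * (u * w) = w := by
  rw [← mul_assoc, Unitary.star_mul_self_of_mem hu, one_mul]

lemma CStarRing.norm_conj_mem_unitary {E : Type*} [NormedRing E] [StarRing E] [CStarRing E]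
    {U : E} (hU : U ∈ unitary E) (w : E) : ‖U * w * star U‖ = ‖w‖ := by
  rw [CStarRing.norm_mul_mem_unitary _ (Unitary.star_mem hU), CStarRing.norm_mem_unitary_mul _ hU]

lemma ContinuousLinearMap.norm_le_one_of_mem_unitary {E : Type*} [NormedAddCommGroup E]
    [InnerProductSpace ℂ E] [CompleteSpace E] {u : E →L[ℂ] E} (hu : u ∈ unitary (E →L[ℂ] E)) :
    ‖u‖ ≤ 1 := by
  simpa using (CStarRing.norm_mem_unitary_mul (1 : E →L[ℂ] E) hu).trans_le norm_id_le

end Unitary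

namespace HoudayerPopa

variable {H : Type} [NormedAddCommGroup H] [InnerProductSpace ℂ H] [CompleteSpace H]
  {M : VonNeumannAlgebra H}

def φnormSq (φ : NFState M) (z : BH H) : ℝ := (φ.toFun (star z * z)).re

namespace NFState

variable (φ : NFState M)

lemma φnormSq_nonneg (z : BH H) : 0 ≤ φnormSq φ z :=
  (Complex.le_def.1 (φ.pos' z)).1

lemma im_apply_star_mul_self_s10 (z : BH H) : (φ.toFun (star z * z)).im = 0 :=
  (Complex.le_def.1 (φ.pos' z)).2.symm

lemma φnorm_sq (z : BH H) : φnorm φ z ^ 2 = φnormSq φ z :=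
  Real.sq_sqrt (φ.φnormSq_nonneg z)

lemma φnormSq_one : φnormSq φ 1 = 1 := by
  simp [φnormSq, φ.map_one']

lemma φnormSq_unitary_mul {u : BH H} (hu : u ∈ unitary (BH H)) (w : BH H) :
    φnormSq φ (u * w) = φnormSq φ w := by
  rw [φnormSq, star_mul, mul_assoc, star_mul_mul_cancel_left hu, φnormSq]

lemma eq_zero_of_φnormSq_eq_zero {z : BH H} (hz : z ∈ M) (h : φnormSq φ z = 0) : z = 0 :=
  φ.faithful' z hz (Complex.ext h (φ.im_apply_star_mul_self_s10 z))

lemma φnormSq_eq_tsum {ξ : ℕ → H} (hξ : Summable fun n => ‖ξ n‖ ^ 2)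
    (hrep : ∀ x, φ.toFun x = ∑' n, ⟪ξ n, x (ξ n)⟫_ℂ) (z : BH H) :
    φnormSq φ z = ∑' n, ‖z (ξ n)‖ ^ 2 := by
  rw [φnormSq, hrep, Complex.re_tsum (summable_inner_apply hξ _)]
  congr 1 with n
  change (⟪ξ n, star z (z (ξ n))⟫_ℂ).re = _
  rw [ContinuousLinearMap.star_eq_adjoint, ContinuousLinearMap.adjoint_inner_right]
  exact inner_self_eq_norm_sq (𝕜 := ℂ) _

lemma norm_apply_le (x : BH H) : ‖φ.toFun x‖ ≤ ‖x‖ := by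
  obtain ⟨ξ, hξ, hrep⟩ := φ.normal'
  have hmass : ∑' n, ‖ξ n‖ ^ 2 = 1 := by
    simpa using (φ.φnormSq_eq_tsum hξ hrep 1).symm.trans φ.φnormSq_one
  calc ‖φ.toFun x‖ ≤ ∑' n, ‖⟪ξ n, x (ξ n)⟫_ℂ‖ := by
        rw [hrep]; exact norm_tsum_le_tsum_norm (summable_inner_apply hξ x).norm
    _ ≤ ∑' n, ‖x‖ * ‖ξ n‖ ^ 2 := by
        exact Summable.tsum_le_tsum (fun _ => norm_inner_apply_self_le x _)
          (summable_inner_apply hξ x).norm (hξ.mul_left ‖x‖)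
    _ = ‖x‖ := by rw [tsum_mul_left, hmass, mul_one]

end NFState

section CommNorm

variable (φ : NFState M)

lemma bddAbove_commNorm_set (x : BH H) :
    BddAbove {r | ∃ y ∈ M, ‖y‖ ≤ 1 ∧ r = ‖φ.toFun (y * x) - φ.toFun (x * y)‖} := by
  refine ⟨2 * ‖x‖, ?_⟩
  rintro r ⟨y, -, hy, rfl⟩
  calc ‖φ.toFun (y * x) - φ.toFun (x * y)‖ ≤ ‖y * x‖ + ‖x * y‖ :=
        (norm_sub_le _ _).trans (add_le_add (φ.norm_apply_le _) (φ.norm_apply_le _))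
    _ ≤ ‖y‖ * ‖x‖ + ‖x‖ * ‖y‖ := add_le_add (norm_mul_le _ _) (norm_mul_le _ _)
    _ ≤ 2 * ‖x‖ := by nlinarith [norm_nonneg x]

lemma norm_sub_le_commNorm (x : BH H) {y : BH H} (hy : y ∈ M) (hy1 : ‖y‖ ≤ 1) :
    ‖φ.toFun (y * x) - φ.toFun (x * y)‖ ≤ commNorm M φ x :=
  le_csSup (bddAbove_commNorm_set φ x) ⟨y, hy, hy1, rfl⟩

lemma commNorm_nonneg (x : BH H) : 0 ≤ commNorm M φ x := by
  simpa using norm_sub_le_commNorm φ x (zero_mem M) (by simp)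

lemma commNorm_le {x : BH H} {b : ℝ}
    (h : ∀ y ∈ M, ‖y‖ ≤ 1 → ‖φ.toFun (y * x) - φ.toFun (x * y)‖ ≤ b) :
    commNorm M φ x ≤ b :=
  csSup_le ⟨_, 0, zero_mem M, by simp, rfl⟩ (by rintro _ ⟨y, hy, hy1, rfl⟩; exact h y hy hy1)

end CommNorm

/-- `u` is a unitary of `M` such that `φ ∘ Ad u` is `ε`-close to `ψ` in the predual norm. -/
structure ApproxConj (φ ψ : NFState M) (u : BH H) (ε : ℝ) : Prop where
  mem : u ∈ M
  mem_unitary : u ∈ unitary (BH H)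
  nonneg : 0 ≤ ε
  norm_sub_le : ∀ w ∈ M, ‖φ.toFun (u * w * star u) - ψ.toFun w‖ ≤ ε * ‖w‖

lemma exists_approxConj (hM : IsTypeIII₁Factor M) (φ ψ : NFState M) {ε : ℝ} (hε : 0 < ε) :
    ∃ u, ApproxConj φ ψ u ε := by
  obtain ⟨u, huM, hu, hclose⟩ := hM.2.2 ψ φ ε hε
  refine ⟨u, huM, hu, hε.le, fun w hw => ?_⟩
  rcases eq_or_ne w 0 with rfl | hw0
  · simp
  have hpos : 0 < ‖w‖ := norm_pos_iff.2 hw0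
  set c : ℂ := ((‖w‖⁻¹ : ℝ) : ℂ)
  have hc : ‖c‖ = ‖w‖⁻¹ := by simp [c]
  have hcx : c • (u * w * star u) ∈ M := M.smul_mem (mul_mem (mul_mem huM hw) (star_mem huM)) c
  have hcx1 : ‖c • (u * w * star u)‖ ≤ 1 := by
    rw [norm_smul, CStarRing.norm_conj_mem_unitary hu, hc, inv_mul_cancel₀ hpos.ne']
  have hconj : star u * (c • (u * w * star u)) * u = c • w := by
    simp only [mul_smul_comm, smul_mul_assoc, mul_assoc, star_mul_mul_cancel_left hu,
      Unitary.star_mul_self_of_mem hu, mul_one]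
  have key := hclose _ hcx hcx1
  rw [hconj, map_smul, map_smul, ← smul_sub, norm_smul, hc, inv_mul_lt_iff₀ hpos] at key
  linarith

namespace ApproxConj

variable {φ ψ : NFState M} {u : BH H} {ε : ℝ}

lemma norm_conj (h : ApproxConj φ ψ u ε) (w : BH H) : ‖u * w * star u‖ = ‖w‖ :=
  CStarRing.norm_conj_mem_unitary h.mem_unitary w

lemma conj_mem (h : ApproxConj φ ψ u ε) {w : BH H} (hw : w ∈ M) : u * w * star u ∈ M :=
  mul_mem (mul_mem h.mem hw) (star_mem h.mem)

lemma star_mul {v : BH H} {ε' : ℝ} (h : ApproxConj φ ψ u ε) (h' : ApproxConj φ ψ v ε') :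
    ApproxConj ψ ψ (star v * u) (ε + ε') := by
  set g := star v * u
  have hgM : g ∈ M := mul_mem (star_mem h'.mem) h.mem
  have hg : g ∈ unitary (BH H) := mul_mem (Unitary.star_mem h'.mem_unitary) h.mem_unitary
  refine ⟨hgM, hg, add_nonneg h.nonneg h'.nonneg, fun w hw => ?_⟩
  have hgw : g * w * star g ∈ M := mul_mem (mul_mem hgM hw) (star_mem hgM)
  have hvg : v * (g * w * star g) * star v = u * w * star u := by
    simp only [g, StarMul.star_mul, star_star, mul_assoc, mul_star_mul_cancel_left h'.mem_unitary,
      Unitary.mul_star_self_of_mem h'.mem_unitary, mul_one]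
  calc ‖ψ.toFun (g * w * star g) - ψ.toFun w‖
      ≤ ‖ψ.toFun (g * w * star g) - φ.toFun (u * w * star u)‖ +
          ‖φ.toFun (u * w * star u) - ψ.toFun w‖ := norm_sub_le_norm_sub_add_norm_sub _ _ _
    _ ≤ ε' * ‖w‖ + ε * ‖w‖ := by
        gcongr
        · rw [norm_sub_rev, ← hvg, ← CStarRing.norm_conj_mem_unitary hg w]
          exact h'.norm_sub_le _ hgw
        · exact h.norm_sub_le w hw
    _ = (ε + ε') * ‖w‖ := by ring

lemma commNorm_le (h : ApproxConj ψ ψ u ε) : commNorm M ψ u ≤ ε := by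
  refine HoudayerPopa.commNorm_le ψ fun t ht ht1 => ?_
  have hconj : u * (t * u) * star u = u * t := by
    simp only [mul_assoc, Unitary.mul_star_self_of_mem h.mem_unitary, mul_one]
  calc ‖ψ.toFun (t * u) - ψ.toFun (u * t)‖ ≤ ε * ‖t * u‖ := by
        rw [norm_sub_rev, ← hconj]; exact h.norm_sub_le _ (mul_mem ht h.mem)
    _ ≤ ε * 1 := by
        gcongr
        · exact h.nonneg
        · rw [CStarRing.norm_mul_mem_unitary _ h.mem_unitary]; exact ht1
    _ = ε := mul_one ε

lemma commNorm_le_commNorm_conj_add (h : ApproxConj φ ψ u ε) {y : BH H} (hy : y ∈ M) :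
    commNorm M ψ y ≤ commNorm M φ (u * y * star u) + 2 * ε * ‖y‖ := by
  refine HoudayerPopa.commNorm_le ψ fun t ht ht1 => ?_
  set x := u * y * star u
  set s := u * t * star u
  have hsx : u * (t * y) * star u = s * x := by
    simp only [s, x, mul_assoc, star_mul_mul_cancel_left h.mem_unitary]
  have hxs : u * (y * t) * star u = x * s := by
    simp only [s, x, mul_assoc, star_mul_mul_cancel_left h.mem_unitary]
  have hty : ‖t * y‖ ≤ ‖y‖ := (norm_mul_le _ _).trans (by nlinarith [norm_nonneg y])
  have hyt : ‖y * t‖ ≤ ‖y‖ := (norm_mul_le _ _).trans (by nlinarith [norm_nonneg y])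
  calc ‖ψ.toFun (t * y) - ψ.toFun (y * t)‖
      ≤ ‖ψ.toFun (t * y) - φ.toFun (s * x)‖ + ‖φ.toFun (s * x) - φ.toFun (x * s)‖ +
          ‖φ.toFun (x * s) - ψ.toFun (y * t)‖ := by
        simp only [← dist_eq_norm]; exact dist_triangle4 ..
    _ ≤ ε * ‖t * y‖ + commNorm M φ x + ε * ‖y * t‖ := by
        gcongr
        · rw [norm_sub_rev, ← hsx]; exact h.norm_sub_le _ (mul_mem ht hy)
        · exact norm_sub_le_commNorm φ x (h.conj_mem ht) (by rw [h.norm_conj]; exact ht1)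
        · rw [← hxs]; exact h.norm_sub_le _ (mul_mem hy ht)
    _ ≤ ε * ‖y‖ + commNorm M φ x + ε * ‖y‖ := by gcongr <;> exact h.nonneg
    _ = commNorm M φ x + 2 * ε * ‖y‖ := by ring

lemma abs_φnormSq_conj_sub_le (h : ApproxConj φ ψ u ε) {w : BH H} (hw : w ∈ M) :
    |φnormSq φ (u * w * star u) - φnormSq ψ w| ≤ ε * ‖w‖ ^ 2 := by
  have hconj : star (u * w * star u) * (u * w * star u) = u * (star w * w) * star u := by
    simp only [StarMul.star_mul, star_star, mul_assoc, star_mul_mul_cancel_left h.mem_unitary]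
  calc |φnormSq φ (u * w * star u) - φnormSq ψ w|
      ≤ ‖φ.toFun (u * (star w * w) * star u) - ψ.toFun (star w * w)‖ := by
        rw [φnormSq, φnormSq, hconj, ← Complex.sub_re]; exact Complex.abs_re_le_norm _
    _ ≤ ε * ‖star w * w‖ := h.norm_sub_le _ (mul_mem (star_mem hw) hw)
    _ = ε * ‖w‖ ^ 2 := by rw [CStarRing.norm_star_mul_self, sq]

end ApproxConj

open ContinuousLinearMapWOT in
lemma NFState.φnormSq_le_of_tendsto_wot (φ : NFState M) {ι : Type*} {l : Filter ι} [l.NeBot]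
    {W : ι → BH H} {W₀ : BH H} (h : Tendsto (fun i => ofCLM (W i)) l (𝓝 (ofCLM W₀))) {B : ℝ}
    (hB : ∀ᶠ i in l, φnormSq φ (W i) ≤ B) : φnormSq φ W₀ ≤ B := by
  obtain ⟨ξ, hξ, hrep⟩ := φ.normal'
  simp only [φ.φnormSq_eq_tsum hξ hrep] at hB ⊢
  refine (summable_norm_apply_sq hξ W₀).tsum_le_of_sum_le fun F => ?_
  have hnorm (z : BH H) :
      ‖WithLp.toLp 2 (fun n : F => z (ξ n))‖ ^ 2 = ∑ n ∈ F, ‖z (ξ n)‖ ^ 2 := by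
    rw [PiLp.norm_sq_eq_of_L2]; exact Finset.sum_coe_sort F fun n => ‖z (ξ n)‖ ^ 2
  rw [← hnorm]
  refine norm_sq_le_of_tendsto_inner (y := fun i => WithLp.toLp 2 fun n : F => W i (ξ n)) ?_
    (hB.mono fun i hi => ?_)
  · simp only [PiLp.inner_apply]
    exact tendsto_finsetSum _ fun n _ =>
      tendsto_iff_forall_inner_apply_tendsto.1 h (ξ n) (W₀ (ξ n))
  · rw [hnorm]
    exact ((summable_norm_apply_sq hξ (W i)).sum_le_tsum F fun _ _ => sq_nonneg _).trans hi

lemma exists_φnormSq_comm_le_of_mem_bicentralizer {ψ : NFState M} {a : BH H}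
    (ha : a ∈ Bicentralizer M ψ) (C : ℝ) {η : ℝ} (hη : 0 < η) :
    ∃ δ > 0, ∀ x ∈ M, ‖x‖ ≤ C → commNorm M ψ x ≤ δ → φnormSq ψ (x * a - a * x) ≤ η := by
  by_contra! hbad
  choose x hxM hxC hxcomm hxbig using fun m : ℕ => hbad _ (Nat.one_div_pos_of_nat (n := m))
  have hAC : x ∈ AC M ψ := ⟨hxM, ⟨C, hxC⟩,
    squeeze_zero (fun m => commNorm_nonneg ψ _) hxcomm tendsto_one_div_add_atTop_nhds_zero_nat⟩
  have hsq := (ha.2 x hAC).pow 2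
  simp only [ψ.φnorm_sq, zero_pow two_ne_zero] at hsq
  obtain ⟨m, hm⟩ := (hsq.eventually (gt_mem_nhds hη)).exists
  exact (hxbig m).not_gt hm

open ContinuousLinearMapWOT in
lemma mem_bicentralizer_of_tendsto_wot {φ : NFState M} {ι : Type*} {l : Filter ι} [l.NeBot]
    {T : ι → BH H} {Λ : BH H} (hΛ : Λ ∈ M) (h : Tendsto (fun i => ofCLM (T i)) l (𝓝 (ofCLM Λ)))
    (hT : ∀ C : ℝ, ∀ η > 0, ∃ δ > 0, ∀ᶠ i in l, ∀ x ∈ M, ‖x‖ ≤ C → commNorm M φ x ≤ δ →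
      φnormSq φ (x * T i - T i * x) ≤ η) :
    Λ ∈ Bicentralizer M φ := by
  refine ⟨hΛ, fun x ⟨hxM, ⟨C, hxC⟩, hxcomm⟩ => ?_⟩
  suffices Tendsto (fun n => φnormSq φ (x n * Λ - Λ * x n)) atTop (𝓝 0) by
    simpa [φnorm, φnormSq] using this.sqrt
  refine tendsto_order.2 ⟨fun b hb => .of_forall fun n => hb.trans_le (φ.φnormSq_nonneg _),
    fun η hη => ?_⟩
  obtain ⟨δ, hδ, hev⟩ := hT C (η / 2) (half_pos hη)
  filter_upwards [hxcomm.eventually (gt_mem_nhds hδ)] with n hn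
  have hlim : Tendsto (fun i => ofCLM (x n * T i - T i * x n)) l
      (𝓝 (ofCLM (x n * Λ - Λ * x n))) := by
    simpa only [ofCLM_sub, ofCLM_mul] using (h.const_mul _).sub (h.mul_const _)
  exact (φ.φnormSq_le_of_tendsto_wot hlim
    (hev.mono fun i hi => hi (x n) (hxM n) (hxC n) hn.le)).trans_lt (half_lt_self hη)

section ConjugatedSequence

variable {φ ψ : NFState M} {a : BH H} {u : ℕ → BH H} {ε : ℕ → ℝ}

lemma exists_φnormSq_conj_sub_conj_le (hu : ∀ k, ApproxConj φ ψ (u k) (ε k))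
    (hε : Tendsto ε atTop (𝓝 0)) (ha : a ∈ Bicentralizer M ψ) {η : ℝ} (hη : 0 < η) :
    ∃ K, ∀ k ≥ K, ∀ l ≥ K,
      φnormSq φ (u k * a * star (u k) - u l * a * star (u l)) ≤ η := by
  obtain ⟨δ, hδ, hcomm⟩ := exists_φnormSq_comm_le_of_mem_bicentralizer ha 1 (half_pos hη)
  obtain ⟨K, hK⟩ := eventually_atTop.1 ((hε.eventually (gt_mem_nhds (half_pos hδ))).and
    (hε.eventually_mul_const_lt ((2 * ‖a‖) ^ 2) (half_pos hη)))
  refine ⟨K, fun k hk l hl => ?_⟩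
  have hg := (hu k).star_mul (hu l)
  set g := star (u l) * u k
  set w := star g * (g * a - a * g)
  have hw : w ∈ M := mul_mem (star_mem hg.mem) (sub_mem (mul_mem hg.mem ha.1) (mul_mem ha.1 hg.mem))
  have hconj : u k * w * star (u k) = u k * a * star (u k) - u l * a * star (u l) := by
    simp only [w, g, StarMul.star_mul, star_star, mul_sub, sub_mul, mul_assoc,
      mul_star_mul_cancel_left (hu k).mem_unitary, mul_star_mul_cancel_left (hu l).mem_unitary,
      Unitary.mul_star_self_of_mem (hu k).mem_unitary, mul_one]
  have hwψ : φnormSq ψ w ≤ η / 2 := by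
    rw [ψ.φnormSq_unitary_mul (Unitary.star_mem hg.mem_unitary)]
    refine hcomm g hg.mem (ContinuousLinearMap.norm_le_one_of_mem_unitary hg.mem_unitary)
      (hg.commNorm_le.trans ?_)
    linarith [(hK k hk).1, (hK l hl).1]
  have hwa : ‖w‖ ≤ 2 * ‖a‖ := by
    rw [CStarRing.norm_mem_unitary_mul _ (Unitary.star_mem hg.mem_unitary)]
    refine (norm_sub_le _ _).trans ?_
    rw [CStarRing.norm_mem_unitary_mul _ hg.mem_unitary,
      CStarRing.norm_mul_mem_unitary _ hg.mem_unitary]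
    linarith
  have hε_w : ε k * ‖w‖ ^ 2 ≤ ε k * (2 * ‖a‖) ^ 2 := by
    gcongr; exact (hu k).nonneg
  have := (abs_le.1 ((hu k).abs_φnormSq_conj_sub_le hw)).2
  rw [hconj] at this
  linarith [(hK k hk).2]

lemma exists_φnormSq_comm_conj_le (hu : ∀ k, ApproxConj φ ψ (u k) (ε k))
    (hε : Tendsto ε atTop (𝓝 0)) (ha : a ∈ Bicentralizer M ψ) (C : ℝ) {η : ℝ} (hη : 0 < η) :
    ∃ δ > 0, ∃ K, ∀ k ≥ K, ∀ x ∈ M, ‖x‖ ≤ C → commNorm M φ x ≤ δ →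
      φnormSq φ (x * (u k * a * star (u k)) - u k * a * star (u k) * x) ≤ η := by
  obtain ⟨δ, hδ, hcomm⟩ := exists_φnormSq_comm_le_of_mem_bicentralizer ha C (half_pos hη)
  obtain ⟨K, hK⟩ := eventually_atTop.1 ((hε.eventually_mul_const_lt (2 * C) (half_pos hδ)).and
    (hε.eventually_mul_const_lt ((2 * C * ‖a‖) ^ 2) (half_pos hη)))
  refine ⟨δ / 2, half_pos hδ, K, fun k hk x hx hxC hxδ => ?_⟩
  have hunit := (hu k).mem_unitary
  set y := star (u k) * x * u k
  have hxy : u k * y * star (u k) = x := by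
    simp only [y, mul_assoc, mul_star_mul_cancel_left hunit, Unitary.mul_star_self_of_mem hunit,
      mul_one]
  have hy : y ∈ M := mul_mem (mul_mem (star_mem (hu k).mem) hx) (hu k).mem
  have hyC : ‖y‖ ≤ C := by rwa [← (hu k).norm_conj, hxy]
  have hC : 0 ≤ C := (norm_nonneg _).trans hyC
  have hyδ : commNorm M ψ y ≤ δ := by
    refine ((hu k).commNorm_le_commNorm_conj_add hy).trans ?_
    have : ε k * ‖y‖ ≤ ε k * C := mul_le_mul_of_nonneg_left hyC (hu k).nonneg
    rw [hxy]; linarith [(hK k hk).1]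
  have hconj : u k * (y * a - a * y) * star (u k) =
      x * (u k * a * star (u k)) - u k * a * star (u k) * x := by
    rw [← hxy]
    simp only [y, mul_sub, sub_mul, mul_assoc, star_mul_mul_cancel_left hunit,
      mul_star_mul_cancel_left hunit]
  have hya : ‖y * a - a * y‖ ≤ 2 * C * ‖a‖ := by
    refine (norm_sub_le _ _).trans ((add_le_add (norm_mul_le _ _) (norm_mul_le _ _)).trans ?_)
    nlinarith [norm_nonneg a]
  have hε_ya : ε k * ‖y * a - a * y‖ ^ 2 ≤ ε k * (2 * C * ‖a‖) ^ 2 := by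
    gcongr; exact (hu k).nonneg
  have hya_mem : y * a - a * y ∈ M := sub_mem (mul_mem hy ha.1) (mul_mem ha.1 hy)
  have := (abs_le.1 ((hu k).abs_φnormSq_conj_sub_le hya_mem)).2
  rw [hconj] at this
  linarith [(hK k hk).2, hcomm y hy hyC hyδ]

open ContinuousLinearMapWOT in
lemma eq_smul_one_of_tendsto_wot (hu : ∀ k, ApproxConj φ ψ (u k) (ε k))
    (hε : Tendsto ε atTop (𝓝 0)) (ha : a ∈ Bicentralizer M ψ) {l : Filter ℕ} [l.NeBot]
    (hl : l ≤ atTop) {c : ℂ}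
    (h : Tendsto (fun k => ofCLM (u k * a * star (u k))) l (𝓝 (ofCLM (c • 1)))) :
    a = c • 1 := by
  have hz : a - c • 1 ∈ M := sub_mem ha.1 (M.smul_mem (one_mem M) c)
  refine sub_eq_zero.1 (ψ.eq_zero_of_φnormSq_eq_zero hz (le_antisymm ?_ (ψ.φnormSq_nonneg _)))
  refine le_of_forall_pos_le_add fun θ hθ => ?_
  obtain ⟨K, hK⟩ := exists_φnormSq_conj_sub_conj_le hu hε ha (half_pos hθ)
  obtain ⟨k, hkK, hk⟩ := ((eventually_ge_atTop K).and
    (hε.eventually_mul_const_lt (‖a - c • 1‖ ^ 2) (half_pos hθ))).exists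
  have hlim : φnormSq φ (u k * a * star (u k) - c • 1) ≤ θ / 2 := by
    refine φ.φnormSq_le_of_tendsto_wot ?_ (((eventually_ge_atTop K).filter_mono hl).mono (hK k hkK))
    simpa only [ofCLM_sub] using tendsto_const_nhds.sub h
  have hconj : u k * (a - c • 1) * star (u k) = u k * a * star (u k) - c • 1 := by
    simp only [mul_sub, sub_mul, mul_smul_comm, smul_mul_assoc, mul_one,
      Unitary.mul_star_self_of_mem (hu k).mem_unitary]
  have := (abs_le.1 ((hu k).abs_φnormSq_conj_sub_le hz)).1
  rw [hconj] at this
  linarith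

end ConjugatedSequence

theorem bicentralizer_subset_scalars (hM : IsTypeIII₁Factor M) (φ ψ : NFState M)
    (hφ : Bicentralizer M φ = Scalars H) : Bicentralizer M ψ ⊆ Scalars H := by
  intro a ha
  choose u hu using fun k : ℕ => exists_approxConj hM φ ψ (Nat.one_div_pos_of_nat (n := k))
  have hε : Tendsto (fun k : ℕ => 1 / ((k : ℝ) + 1)) atTop (𝓝 0) :=
    tendsto_one_div_add_atTop_nhds_zero_nat
  let 𝔘 := Ultrafilter.of (atTop : Filter ℕ)
  obtain ⟨Λ, hΛ⟩ := exists_tendsto_wot_of_norm_le 𝔘 fun k => ((hu k).norm_conj a).le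
  have hΛM : Λ ∈ M := M.mem_of_tendsto_wot (fun k => (hu k).conj_mem ha.1) hΛ
  have hΛφ : Λ ∈ Bicentralizer M φ := mem_bicentralizer_of_tendsto_wot hΛM hΛ fun C η hη =>
    let ⟨δ, hδ, K, hK⟩ := exists_φnormSq_comm_conj_le hu hε ha C hη
    ⟨δ, hδ, Ultrafilter.of_le _ ((eventually_ge_atTop K).mono hK)⟩
  obtain ⟨c, rfl⟩ : Λ ∈ Scalars H := hφ ▸ hΛφ
  exact ⟨c, eq_smul_one_of_tendsto_wot hu hε ha (Ultrafilter.of_le _) hΛ⟩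

lemma scalars_subset_bicentralizer (ψ : NFState M) : Scalars H ⊆ Bicentralizer M ψ := by
  rintro _ ⟨c, rfl⟩
  refine ⟨M.smul_mem (one_mem M) c, fun x _ => ?_⟩
  simp [φnorm]

end HoudayerPopa

theorem stmt10_general
    {H : Type} [NormedAddCommGroup H] [InnerProductSpace ℂ H] [CompleteSpace H]
    (M : VonNeumannAlgebra H) (hM : IsTypeIII₁Factor M)
    (φ ψ : NFState M) (hφ : Bicentralizer M φ = Scalars H) :
    Bicentralizer M ψ = Scalars H :=
  (bicentralizer_subset_scalars hM φ ψ hφ).antisymm (scalars_subset_bicentralizer ψ)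

/-- triviality of the bicentralizer is independent of the choice of normal
faithful state (via Connes–Størmer transitivity). -/
theorem stmt10
    {H : Type} [NormedAddCommGroup H] [InnerProductSpace ℂ H] [CompleteSpace H]
    [TopologicalSpace.SeparableSpace H]
    (M : VonNeumannAlgebra H) (hM : IsTypeIII₁Factor M)
    (φ ψ : NFState M) (hφ : Bicentralizer M φ = Scalars H) :
    Bicentralizer M ψ = Scalars H :=
  stmt10_general M hM φ ψ hφ
end
end
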